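/- arXiv:2503.16404 — 2 statements merged into one kernel-verified Lean document; each statement's English description precedes it below -/
import Mathlib

section
/- For every connected series-parallel multigraph G with d edges, the number of spanning trees of G is at most the Fibonacci number F_{d+1} (with F_1 = F_2 = 1). -/
open Classical

/-- A finite multigraph: a vertex type, an edge type, and an endpoint map into
unordered pairs of vertices. -/
structure MG where
  V : Type
  E : Type
  fV : Fintype V
  fE : Fintype E
  ends : E → Sym2 V

attribute [instance] MG.fV MG.fE

namespace MG

/-- Reachability using only edges from the set `T`. -/
def ReachVia (G : MG) (T : Set G.E) (u v : G.V) : Prop :=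
  Relation.ReflTransGen (fun a b => ∃ e ∈ T, G.ends e = s(a, b)) u v

/-- A multigraph is connected if it has a vertex and all vertices are mutually reachable. -/
def Connected (G : MG) : Prop :=
  Nonempty G.V ∧ ∀ u v : G.V, G.ReachVia Set.univ u v

/-- A spanning tree: a set of edges connecting all vertices whose cardinality is one less
than the number of vertices (equivalently, a spanning connected acyclic edge set). -/
def IsSpanningTree (G : MG) (T : Set G.E) : Prop :=
  (∀ u v : G.V, G.ReachVia T u v) ∧ T.ncard + 1 = Nat.card G.V

/-- The number of spanning trees of `G`. -/
noncomputable def numSpanningTrees (G : MG) : ℕ :=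
  Nat.card {T : Set G.E // G.IsSpanningTree T}

/-- `G` has a `K₄` minor: four disjoint nonempty branch sets, each connected inside itself,
with an edge of `G` between any two of them. -/
def HasK4Minor (G : MG) : Prop :=
  ∃ f : G.V → Option (Fin 4),
    (∀ i : Fin 4, ∃ v, f v = some i) ∧
    (∀ i : Fin 4, ∀ u v : G.V, f u = some i → f v = some i →
      Relation.ReflTransGen
        (fun a b => f a = some i ∧ f b = some i ∧ ∃ e, G.ends e = s(a, b)) u v) ∧
    (∀ i j : Fin 4, i ≠ j → ∃ e : G.E, ∃ u v : G.V,
      G.ends e = s(u, v) ∧ f u = some i ∧ f v = some j)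

/-- A series-parallel multigraph is one with no `K₄` minor. -/
def SeriesParallel (G : MG) : Prop := ¬ G.HasK4Minor

/-- An edge is a loop if its two endpoints coincide. -/
def IsLoop (G : MG) (e : G.E) : Prop := (G.ends e).IsDiag

/-- Deletion of the edge `e`. -/
noncomputable def delete (G : MG) (e : G.E) : MG where
  V := G.V
  E := {e' : G.E // e' ≠ e}
  fV := inferInstance
  fE := Fintype.ofFinite _
  ends := fun e' => G.ends e'.1

/-- An edge is a bridge if deleting it yields a disconnected graph. -/
def IsBridge (G : MG) (e : G.E) : Prop := ¬ (G.delete e).Connected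

/-- Contraction of the edge `e`: its two endpoints are identified and `e` is removed. -/
noncomputable def contract (G : MG) (e : G.E) : MG where
  V := Quot (fun a b : G.V => G.ends e = s(a, b))
  E := {e' : G.E // e' ≠ e}
  fV := Fintype.ofFinite _
  fE := Fintype.ofFinite _
  ends := fun e' => Sym2.map (Quot.mk _) (G.ends e'.1)

end MG

namespace MG

variable {G : MG}

lemma sym2_exists {α : Type _} (z : Sym2 α) : ∃ x y, z = s(x, y) := by
  induction z using Sym2.ind with
  | _ x y => exact ⟨x, y, rfl⟩

lemma reach_symm {T : Set G.E} : Symmetric (G.ReachVia T) :=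
  haveI : Std.Symm (fun a b : G.V => ∃ e ∈ T, G.ends e = s(a, b)) :=
    ⟨fun _ _ h => by obtain ⟨e, he, hh⟩ := h; exact ⟨e, he, hh.trans Sym2.eq_swap⟩⟩
  fun a b h => Relation.ReflTransGen.symmetric.symm a b h

lemma reach_mono {T T' : Set G.E} (h : T ⊆ T') {u v : G.V} (hr : G.ReachVia T u v) :
    G.ReachVia T' u v :=
  Relation.ReflTransGen.mono (fun a b hab => by obtain ⟨e, he, hh⟩ := hab; exact ⟨e, h he, hh⟩) _ _ hr

lemma reach_equiv (T : Set G.E) : Equivalence (G.ReachVia T) :=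
  ⟨fun _ => .refl, fun h => reach_symm h, fun h h' => .trans h h'⟩

lemma reach_empty {u v : G.V} (h : G.ReachVia ∅ u v) : u = v := by
  induction h with
  | refl => rfl
  | tail _ step ih =>
    obtain ⟨e, he, -⟩ := step
    exact absurd he (Set.notMem_empty e)

lemma quot_exact {T : Set G.E} {a b : G.V}
    (h : Quot.mk (G.ReachVia T) a = Quot.mk (G.ReachVia T) b) : G.ReachVia T a b := by
  have := Quot.eqvGen_exact h
  rwa [(reach_equiv T).eqvGen_iff] at this

lemma reach_insert {T : Set G.E} {e : G.E} {x y : G.V} (hxy : G.ends e = s(x, y)) {u v : G.V}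
    (h : G.ReachVia (insert e T) u v) :
    G.ReachVia T u v ∨ (G.ReachVia T u x ∧ G.ReachVia T y v) ∨
      (G.ReachVia T u y ∧ G.ReachVia T x v) := by
  induction h with
  | refl => exact Or.inl .refl
  | @tail b c hub step ih =>
    obtain ⟨f, hf, hends⟩ := step
    rcases Set.mem_insert_iff.1 hf with rfl | hfT
    · have h2 : (x = b ∧ y = c) ∨ (x = c ∧ y = b) := by
        have h3 := hxy.symm.trans hends
        rwa [Sym2.eq_iff] at h3
      rcases h2 with ⟨rfl, rfl⟩ | ⟨rfl, rfl⟩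
      · rcases ih with ih | ⟨h1, _⟩ | ⟨h1, _⟩
        · exact Or.inr (Or.inl ⟨ih, .refl⟩)
        · exact Or.inr (Or.inl ⟨h1, .refl⟩)
        · exact Or.inl h1
      · rcases ih with ih | ⟨h1, _⟩ | ⟨h1, h2'⟩
        · exact Or.inr (Or.inr ⟨ih, .refl⟩)
        · exact Or.inl h1
        · exact Or.inr (Or.inr ⟨h1, .refl⟩)
    · rcases ih with ih | ⟨h1, h2'⟩ | ⟨h1, h2'⟩
      · exact Or.inl (ih.tail ⟨f, hfT, hends⟩)
      · exact Or.inr (Or.inl ⟨h1, h2'.tail ⟨f, hfT, hends⟩⟩)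
      · exact Or.inr (Or.inr ⟨h1, h2'.tail ⟨f, hfT, hends⟩⟩)

lemma card_V_le (T : Set G.E) :
    Nat.card G.V ≤ T.ncard + Nat.card (Quot (G.ReachVia T)) := by
  refine Set.Finite.induction_on T (Set.toFinite T) ?_ ?_
  · have hinj : Function.Injective (Quot.mk (G.ReachVia (∅ : Set G.E))) :=
      fun a b h => reach_empty (quot_exact h)
    have := Nat.card_le_card_of_injective _ hinj
    simpa using this
  · intro e s hes hsf ih
    rw [Set.ncard_insert_of_notMem hes hsf]
    have key : Nat.card (Quot (G.ReachVia s)) ≤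
        Nat.card (Quot (G.ReachVia (insert e s))) + 1 := by
      obtain ⟨x, y, hxy⟩ := sym2_exists (G.ends e)
      by_cases hV : Nonempty G.V
      · set px := Quot.mk (G.ReachVia s) x with hpx
        let φ : Quot (G.ReachVia s) → Quot (G.ReachVia (insert e s)) :=
          Quot.lift (Quot.mk _)
            (fun a b h => Quot.sound (reach_mono (Set.subset_insert e s) h))
        have halm : ∀ q q', φ q = φ q' → q = q' ∨ q = px ∨ q' = px := by
          intro q q'
          induction q using Quot.ind with | _ a =>
          induction q' using Quot.ind with | _ b =>
          intro h
          have hr : G.ReachVia (insert e s) a b := quot_exact h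
          rcases reach_insert hxy hr with h1 | ⟨h1, _⟩ | ⟨_, h1⟩
          · exact Or.inl (Quot.sound h1)
          · exact Or.inr (Or.inl (Quot.sound h1))
          · exact Or.inr (Or.inr (Quot.sound (reach_symm h1)))
        letI : Fintype (Quot (G.ReachVia s)) := Fintype.ofFinite _
        have hsub : Nat.card {q : Quot (G.ReachVia s) // q ≠ px} ≤
            Nat.card (Quot (G.ReachVia (insert e s))) := by
          refine Nat.card_le_card_of_injective (fun q => φ q.1) ?_
          rintro ⟨q, hq⟩ ⟨q', hq'⟩ h
          rcases halm q q' h with h1 | h1 | h1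
          · exact Subtype.ext h1
          · exact absurd h1 hq
          · exact absurd h1 hq'
        have hcard : Nat.card {q : Quot (G.ReachVia s) // q ≠ px} + 1 =
            Nat.card (Quot (G.ReachVia s)) := by
          rw [Nat.card_eq_fintype_card, Nat.card_eq_fintype_card]
          have h1 := Fintype.card_subtype_compl (fun q : Quot (G.ReachVia s) => q = px)
          rw [Fintype.card_subtype_eq] at h1
          have hpos : 0 < Fintype.card (Quot (G.ReachVia s)) := Fintype.card_pos_iff.2 ⟨px⟩
          rw [h1]
          omega
        omega
      · have : IsEmpty G.V := not_nonempty_iff.1 hV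
        have hemp : IsEmpty (Quot (G.ReachVia s)) := by
          constructor
          intro q
          induction q using Quot.ind with
          | _ a => exact this.false a
        simp [Nat.card_of_isEmpty]
    omega

lemma card_V_le_ncard_add_one {T : Set G.E} (h : ∀ u v : G.V, G.ReachVia T u v) :
    Nat.card G.V ≤ T.ncard + 1 := by
  have h1 := card_V_le (G := G) T
  have hsub : Subsingleton (Quot (G.ReachVia T)) :=
    ⟨fun q q' => by
      induction q using Quot.ind with | _ a =>
      induction q' using Quot.ind with | _ b =>
      exact Quot.sound (h a b)⟩
  letI : Fintype (Quot (G.ReachVia T)) := Fintype.ofFinite _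
  have h2 : Nat.card (Quot (G.ReachVia T)) ≤ 1 := by
    rw [Nat.card_eq_fintype_card]
    exact Fintype.card_le_one_iff_subsingleton.2 hsub
  omega

lemma tree_not_loop {T : Set G.E} (hT : G.IsSpanningTree T) {e : G.E} (he : G.IsLoop e) :
    e ∉ T := by
  intro heT
  have hreach : ∀ u v : G.V, G.ReachVia (T \ {e}) u v := by
    intro u v
    induction hT.1 u v with
    | refl => exact .refl
    | @tail b c hub step ih =>
      obtain ⟨f, hf, hends⟩ := step
      by_cases hfe : f = e
      · subst hfe
        have hbc : b = c := Sym2.mk_isDiag_iff.1 (hends ▸ he)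
        exact hbc ▸ ih
      · exact ih.tail ⟨f, ⟨hf, by simpa using hfe⟩, hends⟩
  have hle := card_V_le_ncard_add_one hreach
  have h1 : (T \ {e}).ncard = T.ncard - 1 := Set.ncard_diff_singleton_of_mem heT
  have h2 : 0 < T.ncard := (Set.ncard_pos (Set.toFinite T)).2 ⟨e, heT⟩
  have h3 := hT.2
  omega

lemma bridge_mem_tree {T : Set G.E} (hT : G.IsSpanningTree T) {e : G.E} (hb : G.IsBridge e) :
    e ∈ T := by
  by_contra heT
  apply hb
  constructor
  · have h3 := hT.2
    have : Nat.card G.V ≠ 0 := by omega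
    exact (Nat.card_ne_zero.1 this).1
  · intro u v
    induction hT.1 u v with
    | refl => exact .refl
    | @tail b c hub step ih =>
      obtain ⟨f, hf, hends⟩ := step
      have hfe : f ≠ e := fun h => heT (h ▸ hf)
      exact ih.tail ⟨⟨f, hfe⟩, Set.mem_univ _, hends⟩

lemma connected_delete_loop (hc : G.Connected) {e : G.E} (he : G.IsLoop e) :
    (G.delete e).Connected := by
  refine ⟨hc.1, fun u v => ?_⟩
  induction hc.2 u v with
  | refl => exact .refl
  | @tail b c hub step ih =>
    obtain ⟨f, -, hends⟩ := step
    by_cases hfe : f = e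
    · subst hfe
      have hbc : b = c := Sym2.mk_isDiag_iff.1 (hends ▸ he)
      exact hbc ▸ ih
    · exact ih.tail ⟨⟨f, hfe⟩, Set.mem_univ _, hends⟩

lemma loop_not_bridge (hc : G.Connected) {e : G.E} (he : G.IsLoop e) : ¬ G.IsBridge e :=
  fun hb => hb (connected_delete_loop hc he)

lemma connected_contract (hc : G.Connected) (e : G.E) : (G.contract e).Connected := by
  refine ⟨⟨Quot.mk _ hc.1.some⟩, fun u v => ?_⟩
  induction u using Quot.ind with | _ a =>
  induction v using Quot.ind with | _ b =>
  induction hc.2 a b with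
  | refl => exact .refl
  | @tail b' c hub step ih =>
    obtain ⟨f, -, hends⟩ := step
    by_cases hfe : f = e
    · rw [hfe] at hends
      exact (Quot.sound hends :
        (Quot.mk _ b' : (G.contract e).V) = Quot.mk _ c) ▸ ih
    · refine ih.tail ⟨⟨f, hfe⟩, Set.mem_univ _, ?_⟩
      show Sym2.map _ (G.ends f) = _
      rw [hends, Sym2.map_pair_eq]
      rfl

lemma card_ne_subtype {α : Type _} [Fintype α] (a : α) :
    Nat.card {x : α // x ≠ a} + 1 = Nat.card α := by
  rw [Nat.card_eq_fintype_card, Nat.card_eq_fintype_card]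
  have h1 := Fintype.card_subtype_compl (fun x : α => x = a)
  rw [Fintype.card_subtype_eq] at h1
  have hpos : 0 < Fintype.card α := Fintype.card_pos_iff.2 ⟨a⟩
  rw [h1]
  omega

lemma card_V_contract {e : G.E} {x y : G.V} (hxy : G.ends e = s(x, y)) (hne : x ≠ y) :
    Nat.card (G.contract e).V + 1 = Nat.card G.V := by
  let g : G.V → {z : G.V // z ≠ y} := fun v => if h : v = y then ⟨x, hne⟩ else ⟨v, h⟩
  have hr : ∀ a b : G.V, G.ends e = s(a, b) → g a = g b := by
    intro a b h
    have h2 := hxy.symm.trans h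
    rw [Sym2.eq_iff] at h2
    rcases h2 with ⟨rfl, rfl⟩ | ⟨rfl, rfl⟩
    · simp [g, hne]
    · simp [g, hne]
  let φ : (G.contract e).V → {z : G.V // z ≠ y} := Quot.lift g hr
  let ψ : {z : G.V // z ≠ y} → (G.contract e).V := fun z => Quot.mk _ z.1
  have h1 : ∀ q, ψ (φ q) = q := by
    intro q
    induction q using Quot.ind with | _ a =>
    show Quot.mk _ (g a).1 = Quot.mk _ a
    by_cases ha : a = y
    · subst ha
      show Quot.mk _ (g a).1 = _
      have : g a = ⟨x, hne⟩ := by simp [g]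
      rw [this]
      exact Quot.sound hxy
    · have : g a = ⟨a, ha⟩ := by simp [g, ha]
      rw [this]
  have h2 : ∀ z, φ (ψ z) = z := by
    rintro ⟨z, hz⟩
    show g z = ⟨z, hz⟩
    simp [g, hz]
  have hEq : Nat.card (G.contract e).V = Nat.card {z : G.V // z ≠ y} :=
    Nat.card_congr ⟨φ, ψ, h1, h2⟩
  rw [hEq]
  exact card_ne_subtype y

lemma val_image (e : G.E) (T : Set G.E) :
    Subtype.val '' {f : {e' : G.E // e' ≠ e} | f.1 ∈ T} = T \ {e} := by
  ext g
  constructor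
  · rintro ⟨⟨f, hf⟩, hfT, rfl⟩
    exact ⟨hfT, by simpa using hf⟩
  · rintro ⟨hgT, hge⟩
    exact ⟨⟨g, by simpa using hge⟩, hgT, rfl⟩

lemma ncard_sub (e : G.E) (T : Set G.E) :
    ({f : {e' : G.E // e' ≠ e} | f.1 ∈ T}).ncard = (T \ {e}).ncard := by
  rw [← val_image e T]
  exact (Set.ncard_image_of_injective _ Subtype.val_injective).symm

lemma ncard_sub_del (e : G.E) (T : Set G.E) :
    ({f : (G.delete e).E | f.1 ∈ T}).ncard = (T \ {e}).ncard := ncard_sub e T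

lemma ncard_sub_con (e : G.E) (T : Set G.E) :
    ({f : (G.contract e).E | f.1 ∈ T}).ncard = (T \ {e}).ncard := ncard_sub e T

lemma delTree {e : G.E} {T : Set G.E} (hT : G.IsSpanningTree T) (heT : e ∉ T) :
    (G.delete e).IsSpanningTree {f : (G.delete e).E | f.1 ∈ T} := by
  constructor
  · intro u v
    induction hT.1 u v with
    | refl => exact .refl
    | @tail b c hub step ih =>
      obtain ⟨f, hf, hends⟩ := step
      have hfe : f ≠ e := fun h => heT (h ▸ hf)
      exact ih.tail ⟨⟨f, hfe⟩, hf, hends⟩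
  · have h1 : ({f : (G.delete e).E | f.1 ∈ T}).ncard = T.ncard := by
      rw [ncard_sub_del]
      congr 1
      rw [Set.diff_singleton_eq_self heT]
    rw [h1]
    exact hT.2

lemma conTree {e : G.E} {T : Set G.E} (hT : G.IsSpanningTree T) (heT : e ∈ T)
    (hnl : ¬ G.IsLoop e) :
    (G.contract e).IsSpanningTree {f : (G.contract e).E | f.1 ∈ T} := by
  obtain ⟨x, y, hxy⟩ := sym2_exists (G.ends e)
  have hne : x ≠ y := fun h => hnl (by rw [IsLoop, hxy, h]; exact Sym2.mk_isDiag_iff.2 rfl)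
  constructor
  · intro u v
    induction u using Quot.ind with | _ a =>
    induction v using Quot.ind with | _ b =>
    induction hT.1 a b with
    | refl => exact .refl
    | @tail b' c hub step ih =>
      obtain ⟨f, hf, hends⟩ := step
      by_cases hfe : f = e
      · rw [hfe] at hends
        exact (Quot.sound hends :
          (Quot.mk _ b' : (G.contract e).V) = Quot.mk _ c) ▸ ih
      · refine ih.tail ⟨⟨f, hfe⟩, hf, ?_⟩
        show Sym2.map _ (G.ends f) = _
        rw [hends, Sym2.map_pair_eq]
        rfl
  · have h1 : ({f : (G.contract e).E | f.1 ∈ T}).ncard = T.ncard - 1 := by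
      rw [ncard_sub_con]
      exact Set.ncard_diff_singleton_of_mem heT
    rw [h1]
    have h2 := hT.2
    have h3 := card_V_contract hxy hne
    have h4 : 0 < T.ncard := (Set.ncard_pos (Set.toFinite T)).2 ⟨e, heT⟩
    omega

end MG

namespace MG

variable {G : MG}

lemma val_image_del (e : G.E) (T : Set G.E) :
    Subtype.val '' {f : (G.delete e).E | f.1 ∈ T} = T \ {e} := val_image e T

lemma val_image_con (e : G.E) (T : Set G.E) :
    Subtype.val '' {f : (G.contract e).E | f.1 ∈ T} = T \ {e} := val_image e T

lemma connected_delete_of_not_bridge {e : G.E} (h : ¬ G.IsBridge e) : (G.delete e).Connected :=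
  not_not.1 h

lemma numTrees_le_delete_of_loop {e : G.E} (he : G.IsLoop e) :
    G.numSpanningTrees ≤ (G.delete e).numSpanningTrees := by
  refine Nat.card_le_card_of_injective
    (fun T : {T : Set G.E // G.IsSpanningTree T} =>
      (⟨{f : (G.delete e).E | f.1 ∈ T.1}, delTree T.2 (tree_not_loop T.2 he)⟩ :
        {S : Set (G.delete e).E // (G.delete e).IsSpanningTree S})) ?_
  rintro ⟨T, hT⟩ ⟨S, hS⟩ h
  simp only [Subtype.mk.injEq] at h ⊢
  have h2 := congrArg (Set.image Subtype.val) h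
  erw [val_image_del, val_image_del, Set.diff_singleton_eq_self (tree_not_loop hT he),
    Set.diff_singleton_eq_self (tree_not_loop hS he)] at h2
  exact h2

lemma numTrees_le_contract_of_bridge {e : G.E} (hb : G.IsBridge e) (hnl : ¬ G.IsLoop e) :
    G.numSpanningTrees ≤ (G.contract e).numSpanningTrees := by
  refine Nat.card_le_card_of_injective
    (fun T : {T : Set G.E // G.IsSpanningTree T} =>
      (⟨{f : (G.contract e).E | f.1 ∈ T.1}, conTree T.2 (bridge_mem_tree T.2 hb) hnl⟩ :
        {S : Set (G.contract e).E // (G.contract e).IsSpanningTree S})) ?_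
  rintro ⟨T, hT⟩ ⟨S, hS⟩ h
  simp only [Subtype.mk.injEq] at h ⊢
  have h2 := congrArg (Set.image Subtype.val) h
  erw [val_image_con, val_image_con] at h2
  ext g
  by_cases hg : g = e
  · subst hg
    simp [bridge_mem_tree hT hb, bridge_mem_tree hS hb]
  · constructor
    · intro hgT
      have : g ∈ T \ {e} := ⟨hgT, by simpa using hg⟩
      rw [h2] at this
      exact this.1
    · intro hgS
      have : g ∈ S \ {e} := ⟨hgS, by simpa using hg⟩
      rw [← h2] at this
      exact this.1

lemma numTrees_le_add (e : G.E) (hnl : ¬ G.IsLoop e) :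
    G.numSpanningTrees ≤ (G.delete e).numSpanningTrees + (G.contract e).numSpanningTrees := by
  classical
  let A := {S : Set (G.delete e).E // (G.delete e).IsSpanningTree S}
  let B := {S : Set (G.contract e).E // (G.contract e).IsSpanningTree S}
  let Φ : {T : Set G.E // G.IsSpanningTree T} → A ⊕ B := fun T =>
    if h : e ∈ T.1 then Sum.inr ⟨{f : (G.contract e).E | f.1 ∈ T.1}, conTree T.2 h hnl⟩
    else Sum.inl ⟨{f : (G.delete e).E | f.1 ∈ T.1}, delTree T.2 h⟩
  have hinj : Function.Injective Φ := by
    rintro ⟨T, hT⟩ ⟨S, hS⟩ h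
    simp only [Φ] at h
    by_cases h1 : e ∈ T <;> by_cases h2 : e ∈ S
    · rw [dif_pos h1, dif_pos h2] at h
      have h' : ({f : (G.contract e).E | f.1 ∈ T} : Set _) = {f | f.1 ∈ S} :=
        congrArg Subtype.val (Sum.inr.inj h)
      have h3 := congrArg (Set.image Subtype.val) h'
      erw [val_image_con, val_image_con] at h3
      apply Subtype.ext
      show T = S
      ext g
      by_cases hg : g = e
      · subst hg; simp [h1, h2]
      · constructor
        · intro hgT
          have hx : g ∈ T \ {e} := ⟨hgT, by simpa using hg⟩
          rw [h3] at hx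
          exact hx.1
        · intro hgS
          have hx : g ∈ S \ {e} := ⟨hgS, by simpa using hg⟩
          rw [← h3] at hx
          exact hx.1
    · rw [dif_pos h1, dif_neg h2] at h
      exact absurd h (by simp)
    · rw [dif_neg h1, dif_pos h2] at h
      exact absurd h (by simp)
    · rw [dif_neg h1, dif_neg h2] at h
      have h' : ({f : (G.delete e).E | f.1 ∈ T} : Set _) = {f | f.1 ∈ S} :=
        congrArg Subtype.val (Sum.inl.inj h)
      have h3 := congrArg (Set.image Subtype.val) h'
      erw [val_image_del, val_image_del, Set.diff_singleton_eq_self h1,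
        Set.diff_singleton_eq_self h2] at h3
      exact Subtype.ext h3
  have hle := Nat.card_le_card_of_injective Φ hinj
  rwa [Nat.card_sum] at hle

lemma hasK4_delete {e : G.E} (h : (G.delete e).HasK4Minor) : G.HasK4Minor := by
  obtain ⟨f, h1, h2, h3⟩ := h
  refine ⟨f, h1, ?_, ?_⟩
  · intro i u v hu hv
    refine Relation.ReflTransGen.mono ?_ _ _ (h2 i u v hu hv)
    rintro a b ⟨ha, hb, ⟨e', he'⟩⟩
    exact ⟨ha, hb, ⟨e'.1, he'⟩⟩
  · intro i j hij
    obtain ⟨e', u, v, he', hu, hv⟩ := h3 i j hij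
    exact ⟨e'.1, u, v, he', hu, hv⟩

lemma contract_eq_cases {e : G.E} {a b : G.V}
    (h : (Quot.mk (fun a b : G.V => G.ends e = s(a, b)) a) = Quot.mk _ b) :
    a = b ∨ G.ends e = s(a, b) := by
  have hequiv : Equivalence (fun a b : G.V => a = b ∨ G.ends e = s(a, b)) := by
    constructor
    · intro x; exact Or.inl rfl
    · intro x y hxy
      rcases hxy with rfl | hxy
      · exact Or.inl rfl
      · exact Or.inr (hxy.trans Sym2.eq_swap)
    · intro x y z hxy hyz
      rcases hxy with rfl | hxy
      · exact hyz
      · rcases hyz with rfl | hyz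
        · exact Or.inr hxy
        · have := hxy.symm.trans hyz
          rw [Sym2.eq_iff] at this
          rcases this with ⟨rfl, rfl⟩ | ⟨rfl, -⟩
          · exact Or.inr hxy
          · exact Or.inl rfl
  have hgen := Quot.eqvGen_exact h
  have hmono : ∀ x y : G.V, (G.ends e = s(x, y)) → (x = y ∨ G.ends e = s(x, y)) :=
    fun x y hxy => Or.inr hxy
  have := Relation.EqvGen.mono hmono _ _ hgen
  rwa [hequiv.eqvGen_iff] at this

lemma hasK4_contract {e : G.E} (h : (G.contract e).HasK4Minor) : G.HasK4Minor := by
  obtain ⟨f', h1, h2, h3⟩ := h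
  let mk : G.V → (G.contract e).V := Quot.mk _
  let f : G.V → Option (Fin 4) := fun v => f' (mk v)
  have key : ∀ (i : Fin 4) (q q' : (G.contract e).V),
      Relation.ReflTransGen (fun a b => f' a = some i ∧ f' b = some i ∧
        ∃ ee, (G.contract e).ends ee = s(a, b)) q q' →
      f' q = some i → ∀ a b : G.V, mk a = q → mk b = q' →
      Relation.ReflTransGen (fun a b => f a = some i ∧ f b = some i ∧
        ∃ e', G.ends e' = s(a, b)) a b := by
    intro i q q' h
    induction h with
    | refl =>
      intro hq a b ha hb
      have hab : mk a = mk b := ha.trans hb.symm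
      rcases contract_eq_cases hab with rfl | hab
      · exact .refl
      · refine Relation.ReflTransGen.single ⟨?_, ?_, ⟨e, hab⟩⟩
        · show f' (mk a) = some i; rw [ha]; exact hq
        · show f' (mk b) = some i; rw [hb]; exact hq
    | @tail m q' hqm step ih =>
      intro hq a b ha hb
      obtain ⟨hm, hq', ⟨ee, hee⟩⟩ := step
      obtain ⟨a1, b1, h1⟩ := sym2_exists (G.ends ee.1)
      have hmap : s(mk a1, mk b1) = s(m, q') := by
        rw [← hee]
        show _ = Sym2.map _ (G.ends ee.1)
        erw [h1, Sym2.map_pair_eq]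
      rw [Sym2.eq_iff] at hmap
      rcases hmap with ⟨hA1, hA2⟩ | ⟨hB1, hB2⟩
      · have ih1 := ih hq a a1 ha hA1
        have step1 : f a1 = some i ∧ f b1 = some i ∧ ∃ e', G.ends e' = s(a1, b1) :=
          ⟨by show f' (mk a1) = _; rw [hA1]; exact hm,
           by show f' (mk b1) = _; rw [hA2]; exact hq', ⟨ee.1, h1⟩⟩
        have ih2 := ih1.tail step1
        have hb1b : mk b1 = mk b := hA2.trans hb.symm
        rcases contract_eq_cases hb1b with rfl | hbb
        · exact ih2
        · exact ih2.tail ⟨by show f' (mk b1) = _; rw [hA2]; exact hq',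
            by show f' (mk b) = _; rw [hb]; exact hq', ⟨e, hbb⟩⟩
      · have ih1 := ih hq a b1 ha hB2
        have step1 : f b1 = some i ∧ f a1 = some i ∧ ∃ e', G.ends e' = s(b1, a1) :=
          ⟨by show f' (mk b1) = _; rw [hB2]; exact hm,
           by show f' (mk a1) = _; rw [hB1]; exact hq', ⟨ee.1, h1.trans Sym2.eq_swap⟩⟩
        have ih2 := ih1.tail step1
        have ha1b : mk a1 = mk b := hB1.trans hb.symm
        rcases contract_eq_cases ha1b with rfl | hbb
        · exact ih2
        · exact ih2.tail ⟨by show f' (mk a1) = _; rw [hB1]; exact hq',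
            by show f' (mk b) = _; rw [hb]; exact hq', ⟨e, hbb⟩⟩
  refine ⟨f, ?_, ?_, ?_⟩
  · intro i
    obtain ⟨q, hq⟩ := h1 i
    obtain ⟨a, ha⟩ := Quot.exists_rep q
    exact ⟨a, by show f' (mk a) = _; rw [show mk a = q from ha]; exact hq⟩
  · intro i u v hu hv
    exact key i (mk u) (mk v) (h2 i (mk u) (mk v) hu hv) hu u v rfl rfl
  · intro i j hij
    obtain ⟨ee, u', v', hee, hu', hv'⟩ := h3 i j hij
    obtain ⟨a1, b1, h1⟩ := sym2_exists (G.ends ee.1)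
    have hmap : s(mk a1, mk b1) = s(u', v') := by
      rw [← hee]
      show _ = Sym2.map _ (G.ends ee.1)
      erw [h1, Sym2.map_pair_eq]
    rw [Sym2.eq_iff] at hmap
    rcases hmap with ⟨hA1, hA2⟩ | ⟨hB1, hB2⟩
    · exact ⟨ee.1, a1, b1, h1,
        by show f' (mk a1) = _; rw [hA1]; exact hu',
        by show f' (mk b1) = _; rw [hA2]; exact hv'⟩
    · exact ⟨ee.1, b1, a1, h1.trans Sym2.eq_swap,
        by show f' (mk b1) = _; rw [hB2]; exact hu',
        by show f' (mk a1) = _; rw [hB1]; exact hv'⟩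

lemma sp_delete (h : G.SeriesParallel) (e : G.E) : (G.delete e).SeriesParallel :=
  fun hk => h (hasK4_delete hk)

lemma sp_contract (h : G.SeriesParallel) (e : G.E) : (G.contract e).SeriesParallel :=
  fun hk => h (hasK4_contract hk)

end MG

set_option linter.unusedSectionVars false

namespace K4M

open SimpleGraph

variable {V : Type} [Finite V]

/-- number of neighbours -/
noncomputable def deg (G : SimpleGraph V) (v : V) : ℕ := (G.neighborSet v).ncard

def HasK4 (G : SimpleGraph V) : Prop :=
  ∃ f : V → Option (Fin 4),
    (∀ i : Fin 4, ∃ v, f v = some i) ∧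
    (∀ i : Fin 4, ∀ u v : V, f u = some i → f v = some i →
      Relation.ReflTransGen (fun a b => f a = some i ∧ f b = some i ∧ G.Adj a b) u v) ∧
    (∀ i j : Fin 4, i ≠ j → ∃ u v : V, G.Adj u v ∧ f u = some i ∧ f v = some j)

def Hyp (G : SimpleGraph V) : Prop :=
  (∃ u, 1 ≤ deg G u ∧ ∀ w, w ≠ u → 3 ≤ deg G w) ∨
  (∃ u v, G.Adj u v ∧ 2 ≤ deg G u ∧ 2 ≤ deg G v ∧ ∀ w, w ≠ u → w ≠ v → 3 ≤ deg G w)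

lemma hasK4_map {W : Type} [Finite W] {G : SimpleGraph V} {H : SimpleGraph W}
    (φ : W → V) (hinj : Function.Injective φ)
    (hadj : ∀ a b, H.Adj a b → G.Adj (φ a) (φ b)) (h : HasK4 H) : HasK4 G := by
  obtain ⟨fH, h1, h2, h3⟩ := h
  classical
  let f : V → Option (Fin 4) := fun v => if h : ∃ w, φ w = v then fH h.choose else none
  have hφ : ∀ w, f (φ w) = fH w := by
    intro w
    have hex : ∃ w', φ w' = φ w := ⟨w, rfl⟩
    show dite _ _ _ = _
    rw [dif_pos hex]
    congr 1
    exact hinj hex.choose_spec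
  refine ⟨f, ?_, ?_, ?_⟩
  · intro i
    obtain ⟨w, hw⟩ := h1 i
    exact ⟨φ w, by rw [hφ]; exact hw⟩
  · intro i u v hu hv
    -- u, v are in the image of φ
    have hu' : ∃ w, φ w = u := by
      by_contra hc
      rw [show f u = none from dif_neg hc] at hu
      exact nomatch hu
    have hv' : ∃ w, φ w = v := by
      by_contra hc
      rw [show f v = none from dif_neg hc] at hv
      exact nomatch hv
    obtain ⟨wu, rfl⟩ := hu'
    obtain ⟨wv, rfl⟩ := hv'
    rw [hφ] at hu hv
    have hrtg := h2 i wu wv hu hv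
    refine Relation.ReflTransGen.lift
      (p := fun a b => f a = some i ∧ f b = some i ∧ G.Adj a b) φ ?_ _ _ hrtg
    intro a b hab
    exact ⟨by rw [hφ]; exact hab.1, by rw [hφ]; exact hab.2.1, hadj a b hab.2.2⟩
  · intro i j hij
    obtain ⟨u, v, huv, hu, hv⟩ := h3 i j hij
    exact ⟨φ u, φ v, hadj u v huv, by rw [hφ]; exact hu, by rw [hφ]; exact hv⟩

/-- induced subgraph on a set -/
def sub (G : SimpleGraph V) (S : Set V) : SimpleGraph {z : V // z ∈ S} :=
  G.comap Subtype.val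

lemma hasK4_sub {G : SimpleGraph V} {S : Set V} (h : HasK4 (sub G S)) : HasK4 G :=
  hasK4_map Subtype.val Subtype.val_injective (fun _ _ hab => hab) h

lemma nbr_sub (G : SimpleGraph V) (S : Set V) (z : {z : V // z ∈ S}) :
    Subtype.val '' ((sub G S).neighborSet z) = G.neighborSet z.1 ∩ S := by
  ext w
  constructor
  · rintro ⟨⟨w', hw'⟩, hadj, rfl⟩
    exact ⟨hadj, hw'⟩
  · rintro ⟨hadj, hw⟩
    exact ⟨⟨w, hw⟩, hadj, rfl⟩

lemma deg_sub (G : SimpleGraph V) (S : Set V) (z : {z : V // z ∈ S}) :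
    deg (sub G S) z = (G.neighborSet z.1 ∩ S).ncard := by
  rw [deg, ← nbr_sub, Set.ncard_image_of_injective _ Subtype.val_injective]

lemma card_sub (S : Set V) : Nat.card {z : V // z ∈ S} = S.ncard :=
  Nat.card_coe_set_eq S

/-- contraction of the edge x-r, deleting x and attaching its neighbours to r -/
def ctr (G : SimpleGraph V) (x r : V) : SimpleGraph {z : V // z ≠ x} where
  Adj a b := a ≠ b ∧ (G.Adj a.1 b.1 ∨ (a.1 = r ∧ G.Adj x b.1) ∨ (b.1 = r ∧ G.Adj x a.1))
  symm := ⟨by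
    rintro a b ⟨hab, h⟩
    refine ⟨hab.symm, ?_⟩
    rcases h with h | ⟨h1, h2⟩ | ⟨h1, h2⟩
    · exact Or.inl h.symm
    · exact Or.inr (Or.inr ⟨h1, h2⟩)
    · exact Or.inr (Or.inl ⟨h1, h2⟩)⟩
  loopless := ⟨fun a h => h.1 rfl⟩

lemma hasK4_ctr {G : SimpleGraph V} {x r : V} (hxr : G.Adj x r)
    (h : HasK4 (ctr G x r)) : HasK4 G := by
  obtain ⟨f', h1, h2, h3⟩ := h
  have hrx : r ≠ x := hxr.ne'
  classical
  let f : V → Option (Fin 4) := fun v => if h : v = x then f' ⟨r, hrx⟩ else f' ⟨v, h⟩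
  have hfv : ∀ z : {z : V // z ≠ x}, f z.1 = f' z := by
    rintro ⟨z, hz⟩
    show dite _ _ _ = _
    rw [dif_neg hz]
  have hfx : f x = f' ⟨r, hrx⟩ := by
    show dite _ _ _ = _
    rw [dif_pos rfl]
  have key : ∀ (i : Fin 4) (A B : {z : V // z ≠ x}),
      Relation.ReflTransGen (fun a b => f' a = some i ∧ f' b = some i ∧ (ctr G x r).Adj a b)
        A B →
      Relation.ReflTransGen (fun a b => f a = some i ∧ f b = some i ∧ G.Adj a b) A.1 B.1 := by
    intro i A B h
    induction h with
    | refl => exact .refl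
    | @tail M B hAM step ih =>
      obtain ⟨hM, hB, hne, hadj⟩ := step
      rcases hadj with hadj | ⟨h1, h2⟩ | ⟨h1, h2⟩
      · exact ih.tail ⟨by rw [hfv]; exact hM, by rw [hfv]; exact hB, hadj⟩
      · -- M.1 = r, Adj x B.1
        have hfr : f x = some i := by rw [hfx, show (⟨r, hrx⟩ : {z : V // z ≠ x}) = M from (Subtype.ext h1).symm]; exact hM
        have step1 : f M.1 = some i ∧ f x = some i ∧ G.Adj M.1 x := by
          refine ⟨by rw [hfv]; exact hM, hfr, ?_⟩
          rw [h1]; exact hxr.symm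
        have step2 : f x = some i ∧ f B.1 = some i ∧ G.Adj x B.1 :=
          ⟨hfr, by rw [hfv]; exact hB, h2⟩
        exact (ih.tail step1).tail step2
      · -- B.1 = r, Adj x M.1
        have hfr : f x = some i := by rw [hfx, show (⟨r, hrx⟩ : {z : V // z ≠ x}) = B from (Subtype.ext h1).symm]; exact hB
        have step1 : f M.1 = some i ∧ f x = some i ∧ G.Adj M.1 x :=
          ⟨by rw [hfv]; exact hM, hfr, h2.symm⟩
        have step2 : f x = some i ∧ f B.1 = some i ∧ G.Adj x B.1 := by
          refine ⟨hfr, by rw [hfv]; exact hB, ?_⟩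
          rw [h1]; exact hxr
        exact (ih.tail step1).tail step2
  refine ⟨f, ?_, ?_, ?_⟩
  · intro i
    obtain ⟨q, hq⟩ := h1 i
    exact ⟨q.1, by rw [hfv]; exact hq⟩
  · intro i u v hu hv
    by_cases hux : u = x <;> by_cases hvx : v = x
    · subst hux; subst hvx; exact .refl
    · subst hux
      have hu' : f' ⟨r, hrx⟩ = some i := by rw [← hfx]; exact hu
      have hv' : f' ⟨v, hvx⟩ = some i := by rw [← hfv ⟨v, hvx⟩]; exact hv
      have hpath := key i ⟨r, hrx⟩ ⟨v, hvx⟩ (h2 i _ _ hu' hv')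
      refine Relation.ReflTransGen.head ⟨hu, ?_, ?_⟩ hpath
      · rw [hfv ⟨r, hrx⟩]; exact hu'
      · exact hxr
    · subst hvx
      have hv' : f' ⟨r, hrx⟩ = some i := by rw [← hfx]; exact hv
      have hu' : f' ⟨u, hux⟩ = some i := by rw [← hfv ⟨u, hux⟩]; exact hu
      have hpath := key i ⟨u, hux⟩ ⟨r, hrx⟩ (h2 i _ _ hu' hv')
      refine hpath.tail ⟨?_, hv, ?_⟩
      · rw [hfv ⟨r, hrx⟩]; exact hv'
      · exact hxr.symm
    · have hu' : f' ⟨u, hux⟩ = some i := by rw [← hfv ⟨u, hux⟩]; exact hu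
      have hv' : f' ⟨v, hvx⟩ = some i := by rw [← hfv ⟨v, hvx⟩]; exact hv
      exact key i ⟨u, hux⟩ ⟨v, hvx⟩ (h2 i _ _ hu' hv')
  · intro i j hij
    obtain ⟨A, B, ⟨hne, hadj⟩, hA, hB⟩ := h3 i j hij
    rcases hadj with hadj | ⟨h1, h2⟩ | ⟨h1, h2⟩
    · exact ⟨A.1, B.1, hadj, by rw [hfv]; exact hA, by rw [hfv]; exact hB⟩
    · refine ⟨x, B.1, h2, ?_, by rw [hfv]; exact hB⟩
      rw [hfx, show (⟨r, hrx⟩ : {z : V // z ≠ x}) = A from (Subtype.ext h1).symm]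
      exact hA
    · refine ⟨A.1, x, h2.symm, by rw [hfv]; exact hA, ?_⟩
      rw [hfx, show (⟨r, hrx⟩ : {z : V // z ≠ x}) = B from (Subtype.ext h1).symm]
      exact hB

lemma nbr_ctr_ne {G : SimpleGraph V} {x r : V} (hrx : r ≠ x)
    (z : {z : V // z ≠ x}) (hz : z.1 ≠ r) :
    Subtype.val '' ((ctr G x r).neighborSet z) =
      if G.Adj x z.1 then insert r (G.neighborSet z.1 \ {x}) else G.neighborSet z.1 \ {x} := by
  ext w
  simp only [Set.mem_image, SimpleGraph.mem_neighborSet, Set.mem_insert_iff, Set.mem_diff,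
    Set.mem_singleton_iff]
  constructor
  · rintro ⟨⟨w', hw'⟩, hadj, rfl⟩
    obtain ⟨hne, hor⟩ := hadj
    rcases hor with h | ⟨h1, h2⟩ | ⟨h1, h2⟩
    · by_cases hax : G.Adj x z.1
      · rw [if_pos hax]
        exact Or.inr ⟨h, hw'⟩
      · rw [if_neg hax]
        exact ⟨h, hw'⟩
    · exact absurd h1 hz
    · rw [if_pos h2]
      exact Or.inl h1
  · intro hw
    by_cases hax : G.Adj x z.1
    · rw [if_pos hax] at hw
      rcases hw with rfl | ⟨hadj, hwx⟩
      · refine ⟨⟨w, hrx⟩, ⟨?_, Or.inr (Or.inr ⟨rfl, hax⟩)⟩, rfl⟩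
        intro hc
        exact hz (congrArg Subtype.val hc)
      · refine ⟨⟨w, hwx⟩, ⟨?_, Or.inl hadj⟩, rfl⟩
        intro hc
        have hc2 := congrArg Subtype.val hc
        simp only at hc2
        rw [hc2] at hadj
        exact G.loopless.irrefl w hadj
    · rw [if_neg hax] at hw
      obtain ⟨hadj, hwx⟩ := hw
      refine ⟨⟨w, hwx⟩, ⟨?_, Or.inl hadj⟩, rfl⟩
      intro hc
      have hc2 := congrArg Subtype.val hc
      simp only at hc2
      rw [hc2] at hadj
      exact G.loopless.irrefl w hadj

end K4M

namespace K4M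

open SimpleGraph

variable {V : Type} [Finite V]

lemma deg_ctr_ne {G : SimpleGraph V} {x r : V} (hrx : r ≠ x)
    (hnc : ∀ w, G.Adj x w → ¬ G.Adj r w)
    (z : {z : V // z ≠ x}) (hz : z.1 ≠ r) :
    deg (ctr G x r) z = deg G z.1 := by
  rw [deg, ← Set.ncard_image_of_injective _ Subtype.val_injective, nbr_ctr_ne hrx z hz]
  by_cases hax : G.Adj x z.1
  · rw [if_pos hax]
    have hrn : r ∉ G.neighborSet z.1 \ {x} := by
      rintro ⟨hr, -⟩
      exact hnc z.1 hax (((G.mem_neighborSet _ _).1 hr).symm)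
    rw [Set.ncard_insert_of_notMem hrn (Set.toFinite _)]
    have hxm : x ∈ G.neighborSet z.1 := (G.mem_neighborSet _ _).2 hax.symm
    rw [Set.ncard_diff_singleton_of_mem hxm]
    have hpos : 0 < (G.neighborSet z.1).ncard :=
      (Set.ncard_pos (Set.toFinite _)).2 ⟨x, hxm⟩
    show (G.neighborSet z.1).ncard - 1 + 1 = deg G z.1
    rw [deg]
    omega
  · rw [if_neg hax]
    rw [Set.diff_singleton_eq_self
      (fun hx => hax (((G.mem_neighborSet _ _).1 hx).symm))]
    rfl

lemma nbr_ctr_r {G : SimpleGraph V} {x r : V} (hrx : r ≠ x) :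
    Subtype.val '' ((ctr G x r).neighborSet ⟨r, hrx⟩) =
      (G.neighborSet r \ {x}) ∪ (G.neighborSet x \ {r}) := by
  ext w
  simp only [Set.mem_image, SimpleGraph.mem_neighborSet, Set.mem_union, Set.mem_diff,
    Set.mem_singleton_iff]
  constructor
  · rintro ⟨⟨w', hw'⟩, hadj, rfl⟩
    obtain ⟨hne, hor⟩ := hadj
    have hwr : w' ≠ r := by
      intro hc
      exact hne (Subtype.ext hc.symm)
    rcases hor with h | ⟨h1, h2⟩ | ⟨h1, h2⟩
    · exact Or.inl ⟨h, hw'⟩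
    · exact Or.inr ⟨h2, hwr⟩
    · exact absurd h1 hwr
  · intro hw
    rcases hw with ⟨hadj, hwx⟩ | ⟨hadj, hwr⟩
    · refine ⟨⟨w, hwx⟩, ⟨?_, Or.inl hadj⟩, rfl⟩
      intro hc
      have hc2 := congrArg Subtype.val hc
      simp only at hc2
      rw [← hc2] at hadj
      exact G.loopless.irrefl r hadj
    · refine ⟨⟨w, fun hc => G.loopless.irrefl x (hc ▸ hadj)⟩, ⟨?_, Or.inr (Or.inl ⟨rfl, hadj⟩)⟩, rfl⟩
      intro hc
      have hc2 := congrArg Subtype.val hc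
      simp only at hc2
      exact hwr hc2.symm

lemma deg_ctr_r {G : SimpleGraph V} {x r : V} (hrx : r ≠ x) (hxr : G.Adj x r)
    (hnc : ∀ w, G.Adj x w → ¬ G.Adj r w) :
    deg (ctr G x r) ⟨r, hrx⟩ = deg G r + deg G x - 2 := by
  rw [deg, ← Set.ncard_image_of_injective _ Subtype.val_injective, nbr_ctr_r hrx]
  have hdisj : Disjoint (G.neighborSet r \ {x}) (G.neighborSet x \ {r}) := by
    rw [Set.disjoint_left]
    rintro w ⟨h1, -⟩ ⟨h2, -⟩
    exact hnc w h2 h1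
  rw [Set.ncard_union_eq hdisj (Set.toFinite _) (Set.toFinite _)]
  have hx : x ∈ G.neighborSet r := (G.mem_neighborSet _ _).2 hxr.symm
  have hr : r ∈ G.neighborSet x := (G.mem_neighborSet _ _).2 hxr
  rw [Set.ncard_diff_singleton_of_mem hx,
    Set.ncard_diff_singleton_of_mem hr]
  have h1 : 0 < (G.neighborSet r).ncard := (Set.ncard_pos (Set.toFinite _)).2 ⟨x, hx⟩
  have h2 : 0 < (G.neighborSet x).ncard := (Set.ncard_pos (Set.toFinite _)).2 ⟨r, hr⟩
  show (G.neighborSet r).ncard - 1 + ((G.neighborSet x).ncard - 1) = deg G r + deg G x - 2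
  rw [deg, deg]
  omega

lemma nbr_subset_compl (G : SimpleGraph V) (v : V) :
    G.neighborSet v ⊆ Set.univ \ {v} :=
  fun w hw => ⟨Set.mem_univ w, by simpa using (G.ne_of_adj hw).symm⟩

lemma ncard_univ_diff (v : V) : (Set.univ \ {v} : Set V).ncard = Nat.card V - 1 := by
  rw [Set.ncard_diff_singleton_of_mem (Set.mem_univ v), Set.ncard_univ]

lemma deg_lt (G : SimpleGraph V) (v : V) : deg G v + 1 ≤ Nat.card V := by
  have h1 : deg G v ≤ Nat.card V - 1 := by
    rw [deg, ← ncard_univ_diff v]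
    exact Set.ncard_le_ncard (nbr_subset_compl G v) (Set.toFinite _)
  have h2 : 0 < Nat.card V := Nat.card_pos_iff.2 ⟨⟨v⟩, inferInstance⟩
  omega

lemma full_of_deg {G : SimpleGraph V} {v : V} (h : Nat.card V - 1 ≤ deg G v) :
    ∀ w, w ≠ v → G.Adj v w := by
  have heq : G.neighborSet v = Set.univ \ {v} := by
    apply Set.eq_of_subset_of_ncard_le (nbr_subset_compl G v) _ (Set.toFinite _)
    rw [ncard_univ_diff]
    exact h
  intro w hw
  have hmem : w ∈ G.neighborSet v := by
    rw [heq]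
    exact ⟨Set.mem_univ w, by simpa using hw⟩
  exact (G.mem_neighborSet _ _).1 hmem

lemma hyp_card {G : SimpleGraph V} (h : Hyp G) : 4 ≤ Nat.card V := by
  rcases h with ⟨u, hu1, hu3⟩ | ⟨u, v, huv, hu2, hv2, hrest⟩
  · obtain ⟨w, hw⟩ := (Set.ncard_pos (Set.toFinite _)).1 (by rw [← deg]; omega :
      0 < (G.neighborSet u).ncard)
    have hwu : w ≠ u := (G.ne_of_adj ((G.mem_neighborSet _ _).1 hw)).symm
    have := hu3 w hwu
    have := deg_lt G w
    omega
  · have hex : ∃ w, w ≠ u ∧ w ≠ v := by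
      by_contra hc
      push_neg at hc
      have hsub : G.neighborSet u ⊆ {v} := by
        intro w hw
        have hadj := (G.mem_neighborSet u w).1 hw
        have hwu : w ≠ u := (G.ne_of_adj hadj).symm
        simp [hc w hwu]
      have := Set.ncard_le_ncard hsub (Set.toFinite _)
      simp only [Set.ncard_singleton] at this
      rw [show (G.neighborSet u).ncard = deg G u from rfl] at this
      omega
    obtain ⟨w, hwu, hwv⟩ := hex
    have := hrest w hwu hwv
    have := deg_lt G w
    omega

lemma complete4 {G : SimpleGraph V} {a b c d : V}
    (hab : G.Adj a b) (hac : G.Adj a c) (had : G.Adj a d)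
    (hbc : G.Adj b c) (hbd : G.Adj b d) (hcd : G.Adj c d) : HasK4 G := by
  classical
  let f : V → Option (Fin 4) := fun z =>
    if z = a then some 0 else if z = b then some 1 else if z = c then some 2
    else if z = d then some 3 else none
  have hfa : f a = some 0 := by simp [f]
  have hfb : f b = some 1 := by simp [f, (G.ne_of_adj hab).symm]
  have hfc : f c = some 2 := by simp [f, (G.ne_of_adj hac).symm, (G.ne_of_adj hbc).symm]
  have hfd : f d = some 3 := by
    simp [f, (G.ne_of_adj had).symm, (G.ne_of_adj hbd).symm, (G.ne_of_adj hcd).symm]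
  have hval4 : ∀ z : V, ∀ i : Fin 4, f z = some i →
      (i = 0 ∧ z = a) ∨ (i = 1 ∧ z = b) ∨ (i = 2 ∧ z = c) ∨ (i = 3 ∧ z = d) := by
    intro z i hz
    simp only [f] at hz
    by_cases h1 : z = a
    · rw [if_pos h1] at hz; injection hz with hz; exact Or.inl ⟨hz.symm, h1⟩
    rw [if_neg h1] at hz
    by_cases h2 : z = b
    · rw [if_pos h2] at hz; injection hz with hz; exact Or.inr (Or.inl ⟨hz.symm, h2⟩)
    rw [if_neg h2] at hz
    by_cases h3 : z = c
    · rw [if_pos h3] at hz; injection hz with hz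
      exact Or.inr (Or.inr (Or.inl ⟨hz.symm, h3⟩))
    rw [if_neg h3] at hz
    by_cases h4 : z = d
    · rw [if_pos h4] at hz; injection hz with hz
      exact Or.inr (Or.inr (Or.inr ⟨hz.symm, h4⟩))
    rw [if_neg h4] at hz
    exact absurd hz (by simp)
  have hsingle : ∀ z w : V, ∀ i : Fin 4, f z = some i → f w = some i → z = w := by
    intro z w i hz hw
    rcases hval4 z i hz with ⟨rfl, rfl⟩ | ⟨rfl, rfl⟩ | ⟨rfl, rfl⟩ | ⟨rfl, rfl⟩ <;>
      rcases hval4 w _ hw with ⟨hi, rfl⟩ | ⟨hi, rfl⟩ | ⟨hi, rfl⟩ | ⟨hi, rfl⟩ <;>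
        first | rfl | (exfalso; simp at hi)
  refine ⟨f, ?_, ?_, ?_⟩
  · intro i
    fin_cases i
    · exact ⟨a, hfa⟩
    · exact ⟨b, hfb⟩
    · exact ⟨c, hfc⟩
    · exact ⟨d, hfd⟩
  · intro i u v hu hv
    rw [hsingle u v i hu hv]
  · intro i j hij
    fin_cases i <;> fin_cases j <;> first
      | exact absurd rfl hij
      | exact ⟨a, b, hab, hfa, hfb⟩
      | exact ⟨a, c, hac, hfa, hfc⟩
      | exact ⟨a, d, had, hfa, hfd⟩
      | exact ⟨b, a, hab.symm, hfb, hfa⟩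
      | exact ⟨b, c, hbc, hfb, hfc⟩
      | exact ⟨b, d, hbd, hfb, hfd⟩
      | exact ⟨c, a, hac.symm, hfc, hfa⟩
      | exact ⟨c, b, hbc.symm, hfc, hfb⟩
      | exact ⟨c, d, hcd, hfc, hfd⟩
      | exact ⟨d, a, had.symm, hfd, hfa⟩
      | exact ⟨d, b, hbd.symm, hfd, hfb⟩
      | exact ⟨d, c, hcd.symm, hfd, hfc⟩

lemma last_exit {R : V → V → Prop} (hR : ∀ a b, R a b → a ≠ b) (a : V) :
    ∀ b, Relation.ReflTransGen R a b →
      a = b ∨ ∃ c, R a c ∧ Relation.ReflTransGen (fun u w => R u w ∧ u ≠ a ∧ w ≠ a) c b := by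
  have hkeep : ∀ {c m : V}, Relation.ReflTransGen (fun u w => R u w ∧ u ≠ a ∧ w ≠ a) c m →
      c ≠ a → m ≠ a := by
    intro c m h hc
    induction h with
    | refl => exact hc
    | tail _ st _ => exact st.2.2
  intro b h
  induction h with
  | refl => exact Or.inl rfl
  | @tail m b' hm step ih =>
    rcases ih with rfl | ⟨c, hac, hcm⟩
    · by_cases hb : b' = a
      · exact Or.inl hb.symm
      · exact Or.inr ⟨b', step, .refl⟩
    · by_cases hb : b' = a
      · exact Or.inl hb.symm
      · have hca : c ≠ a := (hR a c hac).symm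
        have hma : m ≠ a := hkeep hcm hca
        exact Or.inr ⟨c, hac, hcm.tail ⟨step, hma, hb⟩⟩

lemma wheel {G : SimpleGraph V} {x y a b : V}
    (hxy : G.Adj x y) (hxa : G.Adj x a) (hxb : G.Adj x b)
    (hya : G.Adj y a) (hyb : G.Adj y b) (hab : a ≠ b)
    (hreach : Relation.ReflTransGen
      (fun c d => G.Adj c d ∧ c ≠ x ∧ c ≠ y ∧ d ≠ x ∧ d ≠ y) a b) :
    HasK4 G := by
  classical
  set R := fun c d => G.Adj c d ∧ c ≠ x ∧ c ≠ y ∧ d ≠ x ∧ d ≠ y with hRdef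
  have hR : ∀ c d, R c d → c ≠ d := fun c d h => G.ne_of_adj h.1
  rcases last_exit hR a b hreach with rfl | ⟨c, hac, hcb⟩
  · exact absurd rfl hab
  set R' := fun u w => R u w ∧ u ≠ a ∧ w ≠ a with hR'def
  set B : Set V := {z | z ≠ a ∧ Relation.ReflTransGen R' z b} with hBdef
  have hbB : b ∈ B := ⟨hab.symm, .refl⟩
  have hcB : c ∈ B := ⟨(hR a c hac).symm, hcb⟩
  have hBx : ∀ z ∈ B, z ≠ x := by
    rintro z ⟨hza, hzb⟩ 
    rcases Relation.ReflTransGen.cases_head hzb with rfl | ⟨m, hzm, -⟩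
    · exact (G.ne_of_adj hxb).symm
    · exact hzm.1.2.1
  have hBy : ∀ z ∈ B, z ≠ y := by
    rintro z ⟨hza, hzb⟩
    rcases Relation.ReflTransGen.cases_head hzb with rfl | ⟨m, hzm, -⟩
    · exact (G.ne_of_adj hyb).symm
    · exact hzm.1.2.2.1
  let f : V → Option (Fin 4) := fun z =>
    if z = x then some 0 else if z = y then some 1 else if z = a then some 2
    else if z ∈ B then some 3 else none
  have hax : a ≠ x := (G.ne_of_adj hxa).symm
  have hay : a ≠ y := (G.ne_of_adj hya).symm
  have hyx : y ≠ x := (G.ne_of_adj hxy).symm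
  have hfx : f x = some 0 := by simp [f]
  have hfy : f y = some 1 := by simp [f, hyx]
  have hfa : f a = some 2 := by simp [f, hax, hay]
  have hfB : ∀ z ∈ B, f z = some 3 := by
    intro z hz
    simp [f, hBx z hz, hBy z hz, (hz : z ∈ B).1, hz]
  have hval : ∀ z : V, ∀ i : Fin 4, f z = some i →
      (i = 0 ∧ z = x) ∨ (i = 1 ∧ z = y) ∨ (i = 2 ∧ z = a) ∨ (i = 3 ∧ z ∈ B) := by
    intro z i hz
    simp only [f] at hz
    by_cases h1 : z = x
    · rw [if_pos h1] at hz; injection hz with hz; exact Or.inl ⟨hz.symm, h1⟩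
    rw [if_neg h1] at hz
    by_cases h2 : z = y
    · rw [if_pos h2] at hz; injection hz with hz; exact Or.inr (Or.inl ⟨hz.symm, h2⟩)
    rw [if_neg h2] at hz
    by_cases h3 : z = a
    · rw [if_pos h3] at hz; injection hz with hz
      exact Or.inr (Or.inr (Or.inl ⟨hz.symm, h3⟩))
    rw [if_neg h3] at hz
    by_cases h4 : z ∈ B
    · rw [if_pos h4] at hz; injection hz with hz
      exact Or.inr (Or.inr (Or.inr ⟨hz.symm, h4⟩))
    rw [if_neg h4] at hz
    exact absurd hz (by simp)
  have hBpath : ∀ z ∈ B, Relation.ReflTransGen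
      (fun u w => f u = some 3 ∧ f w = some 3 ∧ G.Adj u w) z b := by
    intro z hz
    obtain ⟨hza, hzb⟩ := hz
    induction hzb using Relation.ReflTransGen.head_induction_on with
    | refl => exact .refl
    | @head z' m hz'm hmb ih =>
      have hmB : m ∈ B := ⟨hz'm.2.2, hmb⟩
      have hz'B : z' ∈ B := ⟨hz'm.2.1, Relation.ReflTransGen.head hz'm hmb⟩
      exact Relation.ReflTransGen.head ⟨hfB z' hz'B, hfB m hmB, hz'm.1.1⟩ (ih hz'm.2.2)
  have hsymm3 : Symmetric (fun u w => f u = some 3 ∧ f w = some 3 ∧ G.Adj u w) := by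
    rintro u w ⟨h1, h2, h3⟩
    exact ⟨h2, h1, h3.symm⟩
  refine ⟨f, ?_, ?_, ?_⟩
  · intro i
    fin_cases i
    · exact ⟨x, hfx⟩
    · exact ⟨y, hfy⟩
    · exact ⟨a, hfa⟩
    · exact ⟨b, hfB b hbB⟩
  · intro i u v hu hv
    rcases hval u i hu with ⟨rfl, rfl⟩ | ⟨rfl, rfl⟩ | ⟨rfl, rfl⟩ | ⟨rfl, huB⟩ <;>
      rcases hval v _ hv with ⟨hi, rfl⟩ | ⟨hi, rfl⟩ | ⟨hi, rfl⟩ | ⟨hi, hvB⟩ <;>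
        first
          | exact .refl
          | exact absurd hi (by decide)
          | skip
    exact (hBpath u huB).trans ((@Relation.ReflTransGen.symmetric _ _ ⟨fun _ _ h => hsymm3 h⟩).symm _ _ (hBpath v hvB))
  · intro i j hij
    fin_cases i <;> fin_cases j <;> first
      | exact absurd rfl hij
      | exact ⟨x, y, hxy, hfx, hfy⟩
      | exact ⟨x, a, hxa, hfx, hfa⟩
      | exact ⟨x, b, hxb, hfx, hfB b hbB⟩
      | exact ⟨y, x, hxy.symm, hfy, hfx⟩
      | exact ⟨y, a, hya, hfy, hfa⟩
      | exact ⟨y, b, hyb, hfy, hfB b hbB⟩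
      | exact ⟨a, x, hxa.symm, hfa, hfx⟩
      | exact ⟨a, y, hya.symm, hfa, hfy⟩
      | exact ⟨a, c, hac.1, hfa, hfB c hcB⟩
      | exact ⟨b, x, hxb.symm, hfB b hbB, hfx⟩
      | exact ⟨b, y, hyb.symm, hfB b hbB, hfy⟩
      | exact ⟨c, a, hac.1.symm, hfB c hcB, hfa⟩

end K4M

namespace K4M

open SimpleGraph

variable {V : Type} [Finite V]

lemma deg_del_eq {G : SimpleGraph V} (D : Set V) (z : {z : V // z ∈ Dᶜ})
    (h : ∀ w ∈ D, ¬ G.Adj z.1 w) : deg (sub G Dᶜ) z = deg G z.1 := by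
  rw [deg_sub]
  have : G.neighborSet z.1 ∩ Dᶜ = G.neighborSet z.1 := by
    apply Set.inter_eq_self_of_subset_left
    intro w hw hwD
    exact h w hwD ((G.mem_neighborSet _ _).1 hw)
  rw [this]
  rfl

lemma deg_del_ge {G : SimpleGraph V} (D : Set V) (z : {z : V // z ∈ Dᶜ}) :
    deg G z.1 ≤ deg (sub G Dᶜ) z + D.ncard := by
  rw [deg_sub]
  have : G.neighborSet z.1 ∩ Dᶜ = G.neighborSet z.1 \ D := rfl
  rw [this, deg]
  exact Set.ncard_le_ncard_diff_add_ncard _ _ (Set.toFinite _)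

lemma deg_sub_lb {G : SimpleGraph V} (S : Set V) (z : {z : V // z ∈ S})
    (P : Set V) (hP : P ⊆ G.neighborSet z.1 ∩ S) : P.ncard ≤ deg (sub G S) z := by
  rw [deg_sub]
  exact Set.ncard_le_ncard hP (Set.toFinite _)

lemma ncard_ne (x : V) : ({z : V | z ≠ x}).ncard = Nat.card V - 1 := by
  have : {z : V | z ≠ x} = Set.univ \ {x} := by
    ext z; simp
  rw [this, ncard_univ_diff]

lemma ncard_ne2 {u v : V} (huv : u ≠ v) :
    ({z : V | z ≠ u ∧ z ≠ v}).ncard = Nat.card V - 2 := by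
  have h1 : {z : V | z ≠ u ∧ z ≠ v} = Set.univ \ {u, v} := by
    ext z; simp [and_comm]
  rw [h1, Set.ncard_diff (Set.subset_univ _) (Set.toFinite _), Set.ncard_univ,
    Set.ncard_pair huv]

lemma sep_instance {G : SimpleGraph V} {x p q r : V}
    (ih : ∀ (U : Type) (_ : Finite U) (K : SimpleGraph U),
      Nat.card U < Nat.card V → Hyp K → HasK4 K)
    (hxp : G.Adj x p) (hxq : G.Adj x q) (hpq : G.Adj p q)
    (hxr : G.Adj x r) (hpr : G.Adj p r)
    (hall3 : ∀ w, 3 ≤ deg G w)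
    (hnr : ¬ Relation.ReflTransGen
      (fun c d => G.Adj c d ∧ c ≠ x ∧ c ≠ p ∧ d ≠ x ∧ d ≠ p) q r) :
    HasK4 G := by
  classical
  set R := fun c d => G.Adj c d ∧ c ≠ x ∧ c ≠ p ∧ d ≠ x ∧ d ≠ p with hRdef
  set A : Set V := {z | z ≠ x ∧ z ≠ p ∧ Relation.ReflTransGen R z q} with hAdef
  set S : Set V := insert x (insert p A) with hSdef
  have hxS : x ∈ S := Set.mem_insert _ _
  have hpS : p ∈ S := Set.mem_insert_of_mem _ (Set.mem_insert _ _)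
  have hqA : q ∈ A := ⟨hxq.ne', hpq.ne', .refl⟩
  have hqS : q ∈ S := Set.mem_insert_of_mem _ (Set.mem_insert_of_mem _ hqA)
  have hclose : ∀ z ∈ A, ∀ w, G.Adj z w → w ∈ S := by
    intro z hz w hw
    by_cases hwx : w = x
    · rw [hwx]; exact hxS
    by_cases hwp : w = p
    · rw [hwp]; exact hpS
    refine Set.mem_insert_of_mem _ (Set.mem_insert_of_mem _ ⟨hwx, hwp, ?_⟩)
    exact Relation.ReflTransGen.head ⟨hw.symm, hwx, hwp, hz.1, hz.2.1⟩ hz.2.2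
  have hRsymm : Symmetric R := by
    rintro c d ⟨h1, h2, h3, h4, h5⟩
    exact ⟨h1.symm, h4, h5, h2, h3⟩
  have hrS : r ∉ S := by
    intro hr
    rcases hr with rfl | hr
    · exact hxr.ne rfl
    rcases hr with rfl | hr
    · exact hpr.ne rfl
    · exact hnr ((@Relation.ReflTransGen.symmetric _ _ ⟨fun _ _ h => hRsymm h⟩).symm _ _ hr.2.2)
  have hyp2 : Hyp (sub G S) := by
    refine Or.inr ⟨⟨x, hxS⟩, ⟨p, hpS⟩, hxp, ?_, ?_, ?_⟩
    · refine le_trans ?_ (deg_sub_lb S ⟨x, hxS⟩ {p, q} ?_)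
      · rw [Set.ncard_pair hpq.ne]
      · rintro w (rfl | rfl)
        · exact ⟨hxp, hpS⟩
        · exact ⟨hxq, hqS⟩
    · refine le_trans ?_ (deg_sub_lb S ⟨p, hpS⟩ {x, q} ?_)
      · rw [Set.ncard_pair hxq.ne]
      · rintro w (rfl | rfl)
        · exact ⟨hxp.symm, hxS⟩
        · exact ⟨hpq, hqS⟩
    · rintro ⟨z, hzS⟩ hzx hzp
      have hzS2 : z = x ∨ z = p ∨ z ∈ A := by
        rcases Set.mem_insert_iff.1 hzS with h | h
        · exact Or.inl h
        rcases Set.mem_insert_iff.1 h with h2 | h2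
        · exact Or.inr (Or.inl h2)
        · exact Or.inr (Or.inr h2)
      have hzA : z ∈ A := by
        rcases hzS2 with rfl | rfl | hzA'
        · exact absurd (Subtype.ext rfl) hzx
        · exact absurd (Subtype.ext rfl) hzp
        · exact hzA' 
      have hdeq : deg (sub G S) ⟨z, hzS⟩ = deg G z := by
        rw [deg_sub]
        have : G.neighborSet z ∩ S = G.neighborSet z := by
          apply Set.inter_eq_self_of_subset_left
          intro w hw
          exact hclose z hzA w ((G.mem_neighborSet _ _).1 hw)
        rw [this]
        rfl
      rw [hdeq]
      exact hall3 z
  have hcard : Nat.card {z : V // z ∈ S} < Nat.card V := by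
    rw [card_sub]
    have hss : S ⊂ Set.univ := ⟨Set.subset_univ S, fun h => hrS (h (Set.mem_univ r))⟩
    have := Set.ncard_lt_ncard hss (Set.toFinite _)
    rwa [Set.ncard_univ] at this
  exact hasK4_sub (ih _ inferInstance (sub G S) hcard hyp2)

lemma pair_config {G : SimpleGraph V} {x p q r : V}
    (ih : ∀ (U : Type) (_ : Finite U) (K : SimpleGraph U),
      Nat.card U < Nat.card V → Hyp K → HasK4 K)
    (hall3 : ∀ w, 3 ≤ deg G w)
    (hxp : G.Adj x p) (hxq : G.Adj x q) (hpq : G.Adj p q)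
    (hxr : G.Adj x r) (hpr : G.Adj p r) (hqr : q ≠ r) : HasK4 G := by
  by_cases hadj : G.Adj q r
  · exact complete4 hxp hxq hxr hpq hpr hadj
  by_cases hreach : Relation.ReflTransGen
      (fun c d => G.Adj c d ∧ c ≠ x ∧ c ≠ p ∧ d ≠ x ∧ d ≠ p) q r
  · exact wheel hxp hxq hxr hpq hpr hqr hreach
  · exact sep_instance ih hxp hxq hpq hxr hpr hall3 hreach

lemma ctr_case {G : SimpleGraph V} {x t : V}
    (ih : ∀ (U : Type) (_ : Finite U) (K : SimpleGraph U),
      Nat.card U < Nat.card V → Hyp K → HasK4 K)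
    (hxt : G.Adj x t)
    (hall3 : ∀ w, 3 ≤ deg G w)
    (hnc : ∀ w, G.Adj x w → ¬ G.Adj t w) : HasK4 G := by
  have htx : t ≠ x := hxt.ne'
  apply hasK4_ctr hxt
  apply ih _ inferInstance (ctr G x t) ?_ ?_
  · letI := Fintype.ofFinite V
    have := MG.card_ne_subtype x
    have hpos : 0 < Nat.card V := Nat.card_pos_iff.2 ⟨⟨x⟩, inferInstance⟩
    omega
  · refine Or.inl ⟨⟨t, htx⟩, ?_, ?_⟩
    · rw [deg_ctr_r htx hxt hnc]
      have := hall3 t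
      have := hall3 x
      omega
    · intro w hw
      have hwt : w.1 ≠ t := fun hc => hw (Subtype.ext hc)
      rw [deg_ctr_ne htx hnc w hwt]
      exact hall3 w.1

lemma nbrs_of_deg3 {G : SimpleGraph V} {x : V} (h : deg G x = 3) :
    ∃ p q r, p ≠ q ∧ p ≠ r ∧ q ≠ r ∧ G.neighborSet x = {p, q, r} :=
  Set.ncard_eq_three.1 h

lemma base4 {G : SimpleGraph V} (hcard : Nat.card V = 4) (h : Hyp G) : HasK4 G := by
  have hfull : ∀ a b : V, a ≠ b → G.Adj a b := by
    rcases h with ⟨u, hu1, hu3⟩ | ⟨u, v, huv, hu2, hv2, hrest⟩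
    · have hfull' : ∀ w, w ≠ u → ∀ z, z ≠ w → G.Adj w z := by
        intro w hw
        apply full_of_deg
        have := hu3 w hw
        omega
      intro a b hab
      by_cases hau : a = u
      · subst hau
        have hbu : b ≠ a := fun h => hab h.symm
        exact (hfull' b hbu a hab).symm
      · exact hfull' a hau b (fun h => hab h.symm)
    · have hfull' : ∀ w, w ≠ u → w ≠ v → ∀ z, z ≠ w → G.Adj w z := by
        intro w hw1 hw2
        apply full_of_deg
        have := hrest w hw1 hw2
        omega
      intro a b hab
      by_cases hau : a = u
      · subst hau
        by_cases hbv : b = v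
        · subst hbv; exact huv
        · have hbu : b ≠ a := fun h => hab h.symm
          exact (hfull' b hbu hbv a hab).symm
      by_cases hav : a = v
      · subst hav
        by_cases hbu : b = u
        · subst hbu; exact huv.symm
        · have hba : b ≠ a := fun h => hab h.symm
          exact (hfull' b hbu hba a hab).symm
      · exact hfull' a hau hav b (fun h => hab h.symm)
  letI := Fintype.ofFinite V
  have hc4 : Fintype.card V = 4 := by rw [← Nat.card_eq_fintype_card]; exact hcard
  let e := Fintype.equivFinOfCardEq hc4
  have hne : ∀ i j : Fin 4, i ≠ j → e.symm i ≠ e.symm j :=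
    fun i j hij hc => hij (e.symm.injective hc)
  exact complete4 (hfull _ _ (hne 0 1 (by decide))) (hfull _ _ (hne 0 2 (by decide)))
    (hfull _ _ (hne 0 3 (by decide))) (hfull _ _ (hne 1 2 (by decide)))
    (hfull _ _ (hne 1 3 (by decide))) (hfull _ _ (hne 2 3 (by decide)))

end K4M

namespace K4M

open SimpleGraph

variable {V : Type} [Finite V]

lemma ncard_compl_singleton (x : V) : (({x} : Set V)ᶜ).ncard = Nat.card V - 1 := by
  rw [Set.compl_eq_univ_diff, Set.ncard_diff (Set.subset_univ _) (Set.toFinite _),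
    Set.ncard_univ, Set.ncard_singleton]

lemma ncard_compl_pair {u v : V} (h : u ≠ v) :
    (({u, v} : Set V)ᶜ).ncard = Nat.card V - 2 := by
  rw [Set.compl_eq_univ_diff, Set.ncard_diff (Set.subset_univ _) (Set.toFinite _),
    Set.ncard_univ, Set.ncard_pair h]

lemma caseC {G : SimpleGraph V} {u v : V}
    (ih : ∀ (U : Type) (_ : Finite U) (K : SimpleGraph U),
      Nat.card U < Nat.card V → Hyp K → HasK4 K)
    (huv : G.Adj u v) (hu2 : deg G u = 2) (hv2 : 2 ≤ deg G v)
    (hrest : ∀ w, w ≠ u → w ≠ v → 3 ≤ deg G w) : HasK4 G := by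
  classical
  have hpos : 0 < Nat.card V := Nat.card_pos_iff.2 ⟨⟨u⟩, inferInstance⟩
  obtain ⟨p, hpv, hNu⟩ : ∃ p, p ≠ v ∧ G.neighborSet u = {v, p} := by
    obtain ⟨A1, A2, hA, hN⟩ := Set.ncard_eq_two.1 hu2
    have hv : v ∈ G.neighborSet u := (G.mem_neighborSet _ _).2 huv
    rw [hN] at hv
    rcases hv with rfl | rfl
    · exact ⟨A2, hA.symm, hN⟩
    · exact ⟨A1, hA, hN.trans (Set.pair_comm A1 v)⟩
  have hup : G.Adj u p := (G.mem_neighborSet _ _).1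
    (by rw [hNu]; exact Set.mem_insert_of_mem _ rfl)
  have hpu : p ≠ u := (G.ne_of_adj hup).symm
  have hvu : v ≠ u := (G.ne_of_adj huv).symm
  have hmemu : ∀ w, G.Adj u w → w = v ∨ w = p := by
    intro w hw
    have hmem : w ∈ G.neighborSet u := hw
    rw [hNu] at hmem
    simpa using hmem
  by_cases hvp : G.Adj v p
  · by_cases hv3 : 3 ≤ deg G v
    · -- delete u
      apply hasK4_sub (S := ({u} : Set V)ᶜ)
      apply ih _ inferInstance _ ?_ ?_
      · rw [card_sub, ncard_compl_singleton]
        omega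
      · refine Or.inr ⟨⟨v, hvu⟩, ⟨p, hpu⟩, hvp, ?_, ?_, ?_⟩
        · have hge := deg_del_ge (G := G) {u} ⟨v, hvu⟩
          rw [Set.ncard_singleton] at hge
          have hge2 : deg G v ≤ deg (sub G ({u} : Set V)ᶜ) ⟨v, hvu⟩ + 1 := hge
          omega
        · have hge := deg_del_ge (G := G) {u} ⟨p, hpu⟩
          rw [Set.ncard_singleton] at hge
          have hge2 : deg G p ≤ deg (sub G ({u} : Set V)ᶜ) ⟨p, hpu⟩ + 1 := hge
          have := hrest p hpu hpv
          omega
        · rintro ⟨z, hz⟩ hzv hzp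
          have hzu : z ≠ u := hz
          have hzv' : z ≠ v := fun hc => hzv (Subtype.ext hc)
          have hzp' : z ≠ p := fun hc => hzp (Subtype.ext hc)
          have heq : deg (sub G ({u} : Set V)ᶜ) ⟨z, hz⟩ = deg G z := by
            apply deg_del_eq
            intro w hw hadj
            have hw' : w = u := hw
            have hadj' : G.Adj u z := by
              rw [← hw']
              exact (hadj : G.Adj z w).symm
            rcases hmemu z hadj' with hc | hc
            · exact hzv' hc
            · exact hzp' hc
          rw [heq]
          exact hrest z hzu hzv'
    · -- deg v = 2, N(v) = {u, p}; delete u and v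
      have hv2' : deg G v = 2 := by omega
      have hNv : G.neighborSet v = {u, p} := by
        have hsub : {u, p} ⊆ G.neighborSet v := by
          rintro w (rfl | rfl)
          · exact (G.mem_neighborSet _ _).2 huv.symm
          · exact (G.mem_neighborSet _ _).2 hvp
        refine (Set.eq_of_subset_of_ncard_le hsub ?_ (Set.toFinite _)).symm
        rw [Set.ncard_pair (Ne.symm hpu)]
        exact le_of_eq hv2'
      have hmemv : ∀ w, G.Adj v w → w = u ∨ w = p := by
        intro w hw
        have hmem : w ∈ G.neighborSet v := hw
        rw [hNv] at hmem
        simpa using hmem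
      apply hasK4_sub (S := ({u, v} : Set V)ᶜ)
      apply ih _ inferInstance _ ?_ ?_
      · rw [card_sub, ncard_compl_pair (Ne.symm hvu)]
        omega
      · have hpmem : p ∈ ({u, v} : Set V)ᶜ := by
          intro h
          rcases h with rfl | rfl
          · exact hpu rfl
          · exact hpv rfl
        refine Or.inl ⟨⟨p, hpmem⟩, ?_, ?_⟩
        · have hge := deg_del_ge (G := G) {u, v} ⟨p, hpmem⟩
          rw [Set.ncard_pair (Ne.symm hvu)] at hge
          have hge2 : deg G p ≤ deg (sub G ({u, v} : Set V)ᶜ) ⟨p, hpmem⟩ + 2 := hge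
          have := hrest p hpu hpv
          omega
        · rintro ⟨z, hz⟩ hzp
          have hzu : z ≠ u := fun hc => hz (Or.inl hc)
          have hzv : z ≠ v := fun hc => hz (Or.inr hc)
          have hzp' : z ≠ p := fun hc => hzp (Subtype.ext hc)
          have heq : deg (sub G ({u, v} : Set V)ᶜ) ⟨z, hz⟩ = deg G z := by
            apply deg_del_eq
            intro w hw hadj
            have hadj2 : G.Adj z w := hadj
            rcases (hw : w = u ∨ w = v) with hw' | hw'
            · rw [hw'] at hadj2
              rcases hmemu z hadj2.symm with hc | hc
              · exact hzv hc
              · exact hzp' hc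
            · rw [hw'] at hadj2
              rcases hmemv z hadj2.symm with hc | hc
              · exact hzu hc
              · exact hzp' hc
          rw [heq]
          exact hrest z hzu hzv
  · -- contract the edge u-p
    apply hasK4_ctr hup
    apply ih _ inferInstance (ctr G u p) ?_ ?_
    · letI := Fintype.ofFinite V
      have := MG.card_ne_subtype (α := V) u
      omega
    · have hnc : ∀ w, G.Adj u w → ¬ G.Adj p w := by
        intro w hw
        rcases hmemu w hw with rfl | rfl
        · exact fun h => hvp h.symm
        · exact G.loopless.irrefl _
      refine Or.inr ⟨⟨v, hvu⟩, ⟨p, hpu⟩, ?_, ?_, ?_, ?_⟩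
      · exact ⟨fun hc => hpv ((congrArg Subtype.val hc).symm),
          Or.inr (Or.inr ⟨rfl, huv⟩)⟩
      · rw [deg_ctr_ne hpu hnc ⟨v, hvu⟩ (Ne.symm hpv)]
        exact hv2
      · rw [deg_ctr_r hpu hup hnc, hu2]
        have := hrest p hpu hpv
        omega
      · rintro ⟨z, hz⟩ hzv hzp
        have hzp' : z ≠ p := fun hc => hzp (Subtype.ext hc)
        rw [deg_ctr_ne hpu hnc _ hzp']
        exact hrest z hz (fun hc => hzv (Subtype.ext hc))

theorem dirac : ∀ (n : ℕ) (W : Type), ∀ (_ : Finite W), ∀ (H : SimpleGraph W),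
    Nat.card W ≤ n → Hyp H → HasK4 H := by
  intro n
  induction n with
  | zero =>
    intro W instW H hcard hyp
    exfalso
    letI := instW
    have := hyp_card hyp
    omega
  | succ n ih =>
    intro W instW H hcard hyp
    letI := instW
    by_cases hsmall : Nat.card W ≤ n
    · exact ih W instW H hsmall hyp
    have hn1 : Nat.card W = n + 1 := by omega
    have ihW : ∀ (U : Type) (_ : Finite U) (K : SimpleGraph U),
        Nat.card U < Nat.card W → Hyp K → HasK4 K := by
      intro U instU K hlt hK
      exact ih U instU K (by omega) hK
    have h4 : 4 ≤ Nat.card W := hyp_card hyp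
    by_cases hbase : Nat.card W = 4
    · exact base4 hbase hyp
    have h5 : 5 ≤ Nat.card W := by omega
    by_cases hall3 : ∀ w, 3 ≤ deg H w
    · by_cases hmin4 : ∀ w, 4 ≤ deg H w
      · obtain ⟨x⟩ : Nonempty W := (Nat.card_pos_iff.1 (by omega)).1
        apply hasK4_sub (S := ({x} : Set W)ᶜ)
        apply ihW _ inferInstance _ ?_ ?_
        · rw [card_sub, ncard_compl_singleton]
          omega
        · have hz : Nonempty {z : W // z ∈ ({x} : Set W)ᶜ} := by
            apply (Nat.card_pos_iff.1 _).1
            rw [card_sub, ncard_compl_singleton]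
            omega
          obtain ⟨z0⟩ := hz
          have hbound : ∀ z : {z : W // z ∈ ({x} : Set W)ᶜ},
              3 ≤ deg (sub H ({x} : Set W)ᶜ) z := by
            intro z
            have hge := deg_del_ge (G := H) {x} z
            rw [Set.ncard_singleton] at hge
            have := hmin4 z.1
            omega
          exact Or.inl ⟨z0, by have := hbound z0; omega, fun w _ => hbound w⟩
      · push_neg at hmin4
        obtain ⟨x, hx4⟩ := hmin4
        have hx3 : deg H x = 3 := le_antisymm (by omega) (hall3 x)
        obtain ⟨p, q, r, hpq, hpr, hqr, hN⟩ := nbrs_of_deg3 hx3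
        have hxp : H.Adj x p := (H.mem_neighborSet _ _).1 (by rw [hN]; simp)
        have hxq : H.Adj x q := (H.mem_neighborSet _ _).1 (by rw [hN]; simp)
        have hxr : H.Adj x r := (H.mem_neighborSet _ _).1 (by rw [hN]; simp)
        have hmemN : ∀ w, H.Adj x w → w = p ∨ w = q ∨ w = r := by
          intro w hw
          have hmem : w ∈ H.neighborSet x := hw
          rw [hN] at hmem
          simpa using hmem
        by_cases h1 : H.Adj p q <;> by_cases h2 : H.Adj p r <;> by_cases h3 : H.Adj q r
        · exact complete4 hxp hxq hxr h1 h2 h3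
        · exact pair_config ihW hall3 hxp hxq h1 hxr h2 hqr
        · exact pair_config ihW hall3 hxq hxp h1.symm hxr h3 hpr
        · -- p-q adjacent only
          refine ctr_case ihW hxr hall3 ?_
          intro w hw
          rcases hmemN w hw with rfl | rfl | rfl
          · exact fun h => h2 h.symm
          · exact fun h => h3 h.symm
          · exact H.loopless.irrefl _
        · exact pair_config ihW hall3 hxr hxp h2.symm hxq h3.symm hpq
        · -- p-r adjacent only
          refine ctr_case ihW hxq hall3 ?_
          intro w hw
          rcases hmemN w hw with rfl | rfl | rfl
          · exact fun h => h1 h.symm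
          · exact H.loopless.irrefl _
          · exact h3
        · -- q-r adjacent only
          refine ctr_case ihW hxp hall3 ?_
          intro w hw
          rcases hmemN w hw with rfl | rfl | rfl
          · exact H.loopless.irrefl _
          · exact h1
          · exact h2
        · -- no adjacency
          refine ctr_case ihW hxp hall3 ?_
          intro w hw
          rcases hmemN w hw with rfl | rfl | rfl
          · exact H.loopless.irrefl _
          · exact h1
          · exact h2
    · push_neg at hall3
      obtain ⟨w0, hw0⟩ := hall3
      rcases hyp with ⟨u, hu1, hu3⟩ | ⟨u, v, huv, hu2, hv2, hrest⟩
      · have hwu : w0 = u := by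
          by_contra hne
          exact absurd (hu3 w0 hne) (by omega)
        subst hwu
        by_cases hdeg : deg H w0 = 1
        · obtain ⟨rr, hNr⟩ := Set.ncard_eq_one.1 hdeg
          have hurr : H.Adj w0 rr := (H.mem_neighborSet _ _).1 (by rw [hNr]; rfl)
          have hrru : rr ≠ w0 := (H.ne_of_adj hurr).symm
          apply hasK4_sub (S := ({w0} : Set W)ᶜ)
          apply ihW _ inferInstance _ ?_ ?_
          · rw [card_sub, ncard_compl_singleton]
            omega
          · refine Or.inl ⟨⟨rr, hrru⟩, ?_, ?_⟩
            · have hge := deg_del_ge (G := H) {w0} ⟨rr, hrru⟩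
              rw [Set.ncard_singleton] at hge
              have hge2 : deg H rr ≤ deg (sub H ({w0} : Set W)ᶜ) ⟨rr, hrru⟩ + 1 := hge
              have := hu3 rr hrru
              omega
            · rintro ⟨z, hz⟩ hzrr
              have hzu : z ≠ w0 := hz
              have heq : deg (sub H ({w0} : Set W)ᶜ) ⟨z, hz⟩ = deg H z := by
                apply deg_del_eq
                intro w hw hadj
                have hw' : w = w0 := hw
                have hadj' : H.Adj w0 z := by
                  rw [← hw']
                  exact (hadj : H.Adj z w).symm
                have hzn : z ∈ H.neighborSet w0 := hadj'
                rw [hNr, Set.mem_singleton_iff] at hzn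
                exact hzrr (Subtype.ext hzn)
              rw [heq]
              exact hu3 z hzu
        · have hdeg2 : deg H w0 = 2 := by omega
          obtain ⟨rr, ss, hrs, hN2⟩ := Set.ncard_eq_two.1 hdeg2
          have hurr : H.Adj w0 rr := (H.mem_neighborSet _ _).1 (by rw [hN2]; simp)
          have huss : H.Adj w0 ss := (H.mem_neighborSet _ _).1 (by rw [hN2]; simp)
          have hrru : rr ≠ w0 := (H.ne_of_adj hurr).symm
          have hssu : ss ≠ w0 := (H.ne_of_adj huss).symm
          have hmem2 : ∀ w, H.Adj w0 w → w = rr ∨ w = ss := by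
            intro w hw
            have hmem : w ∈ H.neighborSet w0 := hw
            rw [hN2] at hmem
            simpa using hmem
          by_cases hrsadj : H.Adj rr ss
          · apply hasK4_sub (S := ({w0} : Set W)ᶜ)
            apply ihW _ inferInstance _ ?_ ?_
            · rw [card_sub, ncard_compl_singleton]
              omega
            · refine Or.inr ⟨⟨rr, hrru⟩, ⟨ss, hssu⟩, hrsadj, ?_, ?_, ?_⟩
              · have hge := deg_del_ge (G := H) {w0} ⟨rr, hrru⟩
                rw [Set.ncard_singleton] at hge
                have hge2 : deg H rr ≤ deg (sub H ({w0} : Set W)ᶜ) ⟨rr, hrru⟩ + 1 := hge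
                have := hu3 rr hrru
                omega
              · have hge := deg_del_ge (G := H) {w0} ⟨ss, hssu⟩
                rw [Set.ncard_singleton] at hge
                have hge2 : deg H ss ≤ deg (sub H ({w0} : Set W)ᶜ) ⟨ss, hssu⟩ + 1 := hge
                have := hu3 ss hssu
                omega
              · rintro ⟨z, hz⟩ hzr hzs
                have hzu : z ≠ w0 := hz
                have heq : deg (sub H ({w0} : Set W)ᶜ) ⟨z, hz⟩ = deg H z := by
                  apply deg_del_eq
                  intro w hw hadj
                  have hw' : w = w0 := hw
                  have hadj' : H.Adj w0 z := by
                    rw [← hw']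
                    exact (hadj : H.Adj z w).symm
                  rcases hmem2 z hadj' with hc | hc
                  · exact hzr (Subtype.ext hc)
                  · exact hzs (Subtype.ext hc)
                rw [heq]
                exact hu3 z hzu
          · apply hasK4_ctr hurr
            apply ihW _ inferInstance (ctr H w0 rr) ?_ ?_
            · letI := Fintype.ofFinite W
              have := MG.card_ne_subtype (α := W) w0
              omega
            · have hnc : ∀ w, H.Adj w0 w → ¬ H.Adj rr w := by
                intro w hw
                rcases hmem2 w hw with rfl | rfl
                · exact H.loopless.irrefl _
                · exact hrsadj
              refine Or.inl ⟨⟨rr, hrru⟩, ?_, ?_⟩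
              · rw [deg_ctr_r hrru hurr hnc, hdeg2]
                have := hu3 rr hrru
                omega
              · rintro ⟨z, hz⟩ hzrr
                have hzr : z ≠ rr := fun hc => hzrr (Subtype.ext hc)
                rw [deg_ctr_ne hrru hnc _ hzr]
                exact hu3 z hz
      · have hw0uv : w0 = u ∨ w0 = v := by
          by_contra hc
          push_neg at hc
          exact absurd (hrest w0 hc.1 hc.2) (by omega)
        rcases hw0uv with rfl | rfl
        · exact caseC ihW huv (by omega) hv2 hrest
        · exact caseC ihW huv.symm (by omega) hu2 (fun w hA hB => hrest w hB hA)

end K4M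

namespace MG

variable {G : MG}

noncomputable def SG (G : MG) : SimpleGraph G.V where
  Adj a b := a ≠ b ∧ ∃ e, G.ends e = s(a, b)
  symm := ⟨by
    rintro a b ⟨hab, e, he⟩
    exact ⟨hab.symm, e, he.trans Sym2.eq_swap⟩⟩
  loopless := ⟨fun a h => h.1 rfl⟩

lemma hasK4_of_SG (h : K4M.HasK4 (SG G)) : G.HasK4Minor := by
  obtain ⟨f, h1, h2, h3⟩ := h
  refine ⟨f, h1, ?_, ?_⟩
  · intro i u v hu hv
    refine Relation.ReflTransGen.mono ?_ _ _ (h2 i u v hu hv)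
    rintro a b ⟨ha, hb, hadj⟩
    exact ⟨ha, hb, hadj.2⟩
  · intro i j hij
    obtain ⟨u, v, huv, hu, hv⟩ := h3 i j hij
    obtain ⟨e, he⟩ := huv.2
    exact ⟨e, u, v, he, hu, hv⟩

lemma exists_parallel_or_series (hconn : G.Connected) (hsp : G.SeriesParallel)
    (hE : Nat.card G.E ≠ 0) (hnl : ∀ e, ¬ G.IsLoop e) (hnb : ∀ e, ¬ G.IsBridge e) :
    (∃ e f : G.E, e ≠ f ∧ G.ends e = G.ends f) ∨
    (∃ (v : G.V) (e f : G.E), e ≠ f ∧ v ∈ G.ends e ∧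
      ∀ g, v ∈ G.ends g → g = e ∨ g = f) := by
  classical
  by_contra hno
  rw [not_or] at hno
  obtain ⟨hnA, hnB⟩ := hno
  obtain ⟨v0⟩ := hconn.1
  have hEne : Nonempty G.E := by
    by_contra hc
    rw [not_nonempty_iff] at hc
    exact hE (Nat.card_of_isEmpty)
  obtain ⟨e0⟩ := hEne
  obtain ⟨x0, y0, hxy0⟩ := sym2_exists (G.ends e0)
  have hx0y0 : x0 ≠ y0 := fun h => hnl e0 (by
    rw [IsLoop, hxy0, h]
    exact Sym2.mk_isDiag_iff.2 rfl)
  have hother : ∀ (v : G.V) (e : G.E) (h : v ∈ G.ends e), Sym2.Mem.other h ≠ v := by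
    intro v e h hc
    apply hnl e
    rw [IsLoop, ← Sym2.other_spec h, hc]
    exact Sym2.mk_isDiag_iff.2 rfl
  set I : G.V → Set G.E := fun v => {e | v ∈ G.ends e} with hIdef
  -- the degree in SG equals the number of incident edges
  have hdegI : ∀ v : G.V, K4M.deg (SG G) v = (I v).ncard := by
    intro v
    set φ : G.E → G.V := fun e => if h : v ∈ G.ends e then Sym2.Mem.other h else x0 with hφ
    have himage : (SG G).neighborSet v = φ '' (I v) := by
      ext w
      constructor
      · rintro ⟨hvw, e, he⟩
        have hmem : v ∈ G.ends e := by rw [he]; exact Sym2.mem_mk_left _ _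
        refine ⟨e, hmem, ?_⟩
        show dite _ _ _ = w
        rw [dif_pos hmem]
        have hspec := (Sym2.other_spec hmem).trans he
        rw [Sym2.eq_iff] at hspec
        rcases hspec with ⟨-, h2⟩ | ⟨h1, -⟩
        · exact h2
        · exact absurd h1 hvw
      · rintro ⟨e, he, rfl⟩
        have hmem : v ∈ G.ends e := he
        show (SG G).Adj v (φ e)
        have hφe : φ e = Sym2.Mem.other hmem := dif_pos hmem
        rw [hφe]
        exact ⟨(hother v e hmem).symm, ⟨e, (Sym2.other_spec hmem).symm⟩⟩
    have hinj : Set.InjOn φ (I v) := by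
      intro e1 h1 e2 h2 heq
      by_contra hne
      apply hnA
      refine ⟨e1, e2, hne, ?_⟩
      have hm1 : v ∈ G.ends e1 := h1
      have hm2 : v ∈ G.ends e2 := h2
      have hv1 : φ e1 = Sym2.Mem.other hm1 := dif_pos hm1
      have hv2 : φ e2 = Sym2.Mem.other hm2 := dif_pos hm2
      rw [hv1, hv2] at heq
      rw [← Sym2.other_spec hm1, ← Sym2.other_spec hm2, heq]
    rw [K4M.deg, himage, Set.ncard_image_of_injOn hinj]
  -- every vertex has at least one incident edge
  have hInonempty : ∀ v : G.V, (I v).Nonempty := by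
    intro v
    have hexw : ∃ w : G.V, w ≠ v := by
      by_cases hvx : v = x0
      · exact ⟨y0, fun h => hx0y0 (hvx ▸ h.symm)⟩
      · exact ⟨x0, fun h => hvx h.symm⟩
    obtain ⟨w, hwv⟩ := hexw
    rcases Relation.ReflTransGen.cases_head (hconn.2 v w) with h | ⟨c, ⟨g, -, hg⟩, -⟩
    · exact absurd h.symm hwv
    · exact ⟨g, by rw [hIdef]; show v ∈ G.ends g; rw [hg]; exact Sym2.mem_mk_left _ _⟩
  have hIne1 : ∀ v : G.V, (I v).ncard ≠ 1 := by
    intro v h1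
    obtain ⟨g, hg⟩ := Set.ncard_eq_one.1 h1
    have hgI : g ∈ I v := by rw [hg]; rfl
    have hgmem : v ∈ G.ends g := hgI
    apply hnb g
    rintro ⟨-, hreach⟩
    have hstuck : ∀ u : G.V, (G.delete g).ReachVia Set.univ v u → v = u := by
      intro u hr
      rcases Relation.ReflTransGen.cases_head hr with h | ⟨c, ⟨e', -, he'⟩, -⟩
      · exact h
      · exfalso
        have he2 : G.ends e'.1 = s(v, c) := he'
        have : e'.1 ∈ I v := by
          show v ∈ G.ends e'.1
          rw [he2]
          exact Sym2.mem_mk_left _ _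
        rw [hg] at this
        exact e'.2 this
    exact hother v g hgmem (hstuck _ (hreach v (Sym2.Mem.other hgmem))).symm
  have hIne2 : ∀ v : G.V, (I v).ncard ≠ 2 := by
    intro v h2
    obtain ⟨e, f, hef, hIf⟩ := Set.ncard_eq_two.1 h2
    apply hnB
    refine ⟨v, e, f, hef, ?_, ?_⟩
    · show v ∈ G.ends e
      have : e ∈ I v := by rw [hIf]; exact Set.mem_insert _ _
      exact this
    · intro g hgmem
      have : g ∈ I v := hgmem
      rw [hIf] at this
      simpa using this
  have hdeg3 : ∀ v : G.V, 3 ≤ K4M.deg (SG G) v := by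
    intro v
    rw [hdegI v]
    have h0 : 0 < (I v).ncard := (Set.ncard_pos (Set.toFinite _)).2 (hInonempty v)
    have h1 := hIne1 v
    have h2 := hIne2 v
    omega
  apply hsp
  apply hasK4_of_SG
  apply K4M.dirac (Nat.card G.V) G.V inferInstance (SG G) le_rfl
  exact Or.inl ⟨v0, by have := hdeg3 v0; omega, fun w _ => hdeg3 w⟩

end MG

namespace MG

variable {G : MG}

lemma numTrees_le_one_of_no_edges (h : IsEmpty G.E) : G.numSpanningTrees ≤ 1 := by
  have hsub : Subsingleton {T : Set G.E // G.IsSpanningTree T} := by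
    constructor
    rintro ⟨T, _⟩ ⟨S, _⟩
    apply Subtype.ext
    ext g
    exact h.elim g
  letI : Fintype {T : Set G.E // G.IsSpanningTree T} := Fintype.ofFinite _
  rw [numSpanningTrees, Nat.card_eq_fintype_card]
  exact Fintype.card_le_one_iff_subsingleton.2 hsub

lemma card_E_delete (e : G.E) : Nat.card (G.delete e).E + 1 = Nat.card G.E :=
  card_ne_subtype e

lemma card_E_contract (e : G.E) : Nat.card (G.contract e).E + 1 = Nat.card G.E :=
  card_ne_subtype e

theorem main_aux : ∀ d : ℕ, ∀ G : MG, G.Connected → G.SeriesParallel → Nat.card G.E = d →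
    G.numSpanningTrees ≤ Nat.fib (d + 1) := by
  intro d
  induction d using Nat.strong_induction_on with
  | _ d IH =>
  intro G hconn hsp hd
  rcases Nat.eq_zero_or_pos d with rfl | hdpos
  · have hE : IsEmpty G.E := by
      rw [Nat.card_eq_zero] at hd
      rcases hd with h | h
      · exact h
      · exact absurd h (not_infinite_iff_finite.2 (Finite.of_fintype _))
    calc G.numSpanningTrees ≤ 1 := numTrees_le_one_of_no_edges hE
    _ ≤ Nat.fib (0 + 1) := by norm_num
  by_cases hloop : ∃ e, G.IsLoop e
  · obtain ⟨e, he⟩ := hloop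
    have h1 : Nat.card (G.delete e).E = d - 1 := by have := card_E_delete (G := G) e; omega
    have h2 := IH (d - 1) (by omega) (G.delete e) (connected_delete_loop hconn he)
      (sp_delete hsp e) h1
    calc G.numSpanningTrees ≤ (G.delete e).numSpanningTrees := numTrees_le_delete_of_loop he
    _ ≤ Nat.fib (d - 1 + 1) := h2
    _ ≤ Nat.fib (d + 1) := Nat.fib_mono (by omega)
  by_cases hbr : ∃ e, G.IsBridge e
  · obtain ⟨e, he⟩ := hbr
    have hnl : ¬ G.IsLoop e := fun hl => loop_not_bridge hconn hl he
    have h1 : Nat.card (G.contract e).E = d - 1 := by have := card_E_contract (G := G) e; omega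
    have h2 := IH (d - 1) (by omega) (G.contract e) (connected_contract hconn e)
      (sp_contract hsp e) h1
    calc G.numSpanningTrees ≤ (G.contract e).numSpanningTrees :=
      numTrees_le_contract_of_bridge he hnl
    _ ≤ Nat.fib (d - 1 + 1) := h2
    _ ≤ Nat.fib (d + 1) := Nat.fib_mono (by omega)
  push_neg at hloop hbr
  rcases exists_parallel_or_series hconn hsp (by omega) hloop hbr with
    ⟨e, f, hef, hends⟩ | ⟨v, e, f, hef, hve, honly⟩
  · -- parallel case
    have hd2 : 2 ≤ d := by
      have : Nontrivial G.E := nontrivial_of_ne e f hef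
      have := Finite.one_lt_card (α := G.E)
      omega
    have hnle : ¬ G.IsLoop e := hloop e
    -- tau(G - e) <= fib d
    have hDcard : Nat.card (G.delete e).E = d - 1 := by have := card_E_delete (G := G) e; omega
    have hD := IH (d - 1) (by omega) (G.delete e) (connected_delete_of_not_bridge (hbr e))
      (sp_delete hsp e) hDcard
    -- f as loop in G/e
    have hfne : f ≠ e := fun h => hef h.symm
    set fb : (G.contract e).E := ⟨f, hfne⟩ with hfb
    have hfloop : (G.contract e).IsLoop fb := by
      show (Sym2.map _ (G.ends f)).IsDiag
      obtain ⟨x, y, hxy⟩ := sym2_exists (G.ends e)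
      have hf2 : G.ends f = s(x, y) := hends.symm.trans hxy
      erw [hf2, Sym2.map_pair_eq, Sym2.mk_isDiag_iff]
      exact Quot.sound hxy
    have hCcard : Nat.card ((G.contract e).delete fb).E = d - 2 := by
      have ha := card_E_delete (G := G.contract e) fb
      have hb := card_E_contract (G := G) e
      omega
    have hC2 := IH (d - 2) (by omega) ((G.contract e).delete fb)
      (connected_delete_loop (connected_contract hconn e) hfloop)
      (sp_delete (sp_contract hsp e) fb) hCcard
    have hC : (G.contract e).numSpanningTrees ≤ Nat.fib (d - 2 + 1) :=
      le_trans (numTrees_le_delete_of_loop hfloop) hC2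
    have hsum := le_trans (numTrees_le_add e hnle) (Nat.add_le_add hD hC)
    obtain ⟨m, rfl⟩ : ∃ m, d = m + 2 := ⟨d - 2, by omega⟩
    have e1 : m + 2 - 1 = m + 1 := by omega
    have e2 : m + 2 - 2 = m := by omega
    rw [e1, e2] at hsum
    calc G.numSpanningTrees ≤ Nat.fib (m + 1 + 1) + Nat.fib (m + 1) := hsum
    _ = Nat.fib (m + 1) + Nat.fib (m + 1 + 1) := Nat.add_comm _ _
    _ = Nat.fib (m + 1 + 2) := (Nat.fib_add_two).symm
    _ = Nat.fib (m + 2 + 1) := by congr 1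
  · -- series case
    have hnle : ¬ G.IsLoop e := hloop e
    have hd2 : 2 ≤ d := by
      have : Nontrivial G.E := nontrivial_of_ne e f hef
      have := Finite.one_lt_card (α := G.E)
      omega
    -- other endpoint of e
    set a := Sym2.Mem.other hve with ha
    have haspec : s(v, a) = G.ends e := Sym2.other_spec hve
    have hva : v ≠ a := by
      intro h
      apply hloop e
      show (G.ends e).IsDiag
      rw [← haspec, ← h]
      exact Sym2.mk_isDiag_iff.2 rfl
    -- tau(G/e) <= fib d
    have hCcard : Nat.card (G.contract e).E = d - 1 := by
      have := card_E_contract (G := G) e; omega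
    have hC := IH (d - 1) (by omega) (G.contract e) (connected_contract hconn e)
      (sp_contract hsp e) hCcard
    -- f is a bridge in G - e
    have hfne : f ≠ e := fun h => hef h.symm
    set fb : (G.delete e).E := ⟨f, hfne⟩ with hfb
    have hfnl : ¬ (G.delete e).IsLoop fb := hloop f
    have hfbr : (G.delete e).IsBridge fb := by
      rintro ⟨hne, hreach⟩
      have hstuck : ∀ u : G.V, ((G.delete e).delete fb).ReachVia Set.univ v u → v = u := by
        intro u hr
        rcases Relation.ReflTransGen.cases_head hr with h | ⟨c, ⟨g, -, hg⟩, -⟩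
        · exact h
        · exfalso
          have hvg : v ∈ G.ends g.1.1 := by
            have hg2 : G.ends g.1.1 = s(v, c) := hg
            rw [hg2]
            exact Sym2.mem_mk_left v c
          rcases honly g.1.1 hvg with h | h
          · exact g.1.2 h
          · exact g.2 (Subtype.ext h)
      exact hva (hstuck a (hreach v a))
    have hDcard : Nat.card ((G.delete e).contract fb).E = d - 2 := by
      have hx := card_E_contract (G := G.delete e) fb
      have hy := card_E_delete (G := G) e
      omega
    have hD2 := IH (d - 2) (by omega) ((G.delete e).contract fb)
      (connected_contract (connected_delete_of_not_bridge (hbr e)) fb)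
      (sp_contract (sp_delete hsp e) fb) hDcard
    have hD : (G.delete e).numSpanningTrees ≤ Nat.fib (d - 2 + 1) :=
      le_trans (numTrees_le_contract_of_bridge hfbr hfnl) hD2
    have hsum := le_trans (numTrees_le_add e hnle) (Nat.add_le_add hD hC)
    obtain ⟨m, rfl⟩ : ∃ m, d = m + 2 := ⟨d - 2, by omega⟩
    have e1 : m + 2 - 1 = m + 1 := by omega
    have e2 : m + 2 - 2 = m := by omega
    rw [e1, e2] at hsum
    calc G.numSpanningTrees ≤ Nat.fib (m + 1) + Nat.fib (m + 1 + 1) := hsum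
    _ = Nat.fib (m + 1 + 2) := (Nat.fib_add_two).symm
    _ = Nat.fib (m + 2 + 1) := by congr 1

end MG


/-- A connected series-parallel multigraph with `d` edges has at most
`F_{d+1}` spanning trees, where `F` is the Fibonacci sequence with `F₁ = F₂ = 1`. -/
theorem numSpanningTrees_le_fib (G : MG) (hconn : G.Connected) (hsp : G.SeriesParallel)
    (d : ℕ) (hd : Nat.card G.E = d) :
    G.numSpanningTrees ≤ Nat.fib (d + 1) :=
  MG.main_aux d G hconn hsp hd
end

section
/- The product-join of two 2-connected bipartite graphs H_1 and H_2 (along parts A_1 and A_2) is 2-connected, provided H_1 and H_2 each have at least 3 vertices. -/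
/-- The product-join of bipartite graphs `H₁` (on `A₁ ⊕ B₁`) and `H₂` (on `A₂ ⊕ B₂`) along
`A₁` and `A₂`: the bipartite graph with parts `A₁ × A₂` and `(A₁ × B₂) ⊕ (B₁ × A₂)`, where
`(a₁, a₂)` is adjacent to `(a₁, b₂)` whenever `a₂ ~ b₂` in `H₂`, and to `(b₁, a₂)` whenever
`a₁ ~ b₁` in `H₁`. -/
def productJoin {A₁ B₁ A₂ B₂ : Type} (H₁ : SimpleGraph (A₁ ⊕ B₁))
    (H₂ : SimpleGraph (A₂ ⊕ B₂)) :
    SimpleGraph ((A₁ × A₂) ⊕ ((A₁ × B₂) ⊕ (B₁ × A₂))) :=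
  SimpleGraph.fromRel (fun x y =>
    (∃ a₁ a₂ b₂, x = Sum.inl (a₁, a₂) ∧ y = Sum.inr (Sum.inl (a₁, b₂)) ∧
        H₂.Adj (Sum.inl a₂) (Sum.inr b₂)) ∨
    (∃ a₁ a₂ b₁, x = Sum.inl (a₁, a₂) ∧ y = Sum.inr (Sum.inr (b₁, a₂)) ∧
        H₁.Adj (Sum.inl a₁) (Sum.inr b₁)))

/-- A graph on `A ⊕ B` is bipartite with parts `A` and `B`: all edges go between the two
parts. -/
def BipartiteOn {A B : Type} (H : SimpleGraph (A ⊕ B)) : Prop :=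
  (∀ a a' : A, ¬ H.Adj (Sum.inl a) (Sum.inl a')) ∧
  (∀ b b' : B, ¬ H.Adj (Sum.inr b) (Sum.inr b'))

/-- A graph is 2-connected if it is connected, has at least 3 vertices, and remains
connected after deleting any single vertex. -/
def TwoConnectedSG {V : Type} (G : SimpleGraph V) : Prop :=
  G.Connected ∧ 3 ≤ Nat.card V ∧ ∀ v : V, (G.induce {u : V | u ≠ v}).Connected

/-!
Every vertex of the product-join lies on a copy `{a₁} × H₂` or `H₁ × {a₂}` of a factor, and
these copies meet in the grid `A₁ × A₂`. Deleting a vertex `v` leaves every copy connected,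
because the factors are 2-connected. Two grid vertices `(a₁, a₂)`, `(a₁', a₂')` are then
joined through one of the corners `(a₁, a₂')`, `(a₁', a₂)`, at most one of which is `v`, and
every other vertex reaches a grid vertex inside its copy, as each part `Aᵢ` of a 2-connected
bipartite graph has at least two elements.
-/

open SimpleGraph Sum Function

lemma nontrivial_setOf_ne_of_three_le_card {V : Type} (h : 3 ≤ Nat.card V) (v : V) :
    Nontrivial {u | u ≠ v} := by
  show Nontrivial {u // u ≠ v}
  have : Finite V := Nat.finite_of_card_ne_zero (by omega)
  have := Fintype.ofFinite V
  classical
  apply Fintype.one_lt_card_iff_nontrivial.mp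
  rw [Fintype.card_subtype_compl, Fintype.card_subtype_eq, ← Nat.card_eq_fintype_card]
  omega

section TwoConnected

variable {V W : Type} {G : SimpleGraph V}

lemma TwoConnectedSG.finite (h : TwoConnectedSG G) : Finite V :=
  Nat.finite_of_card_ne_zero (by have := h.2.1; omega)

lemma twoConnectedSG_of_forall_connected_induce_ne (h : 3 ≤ Nat.card V)
    (hG : ∀ v, (G.induce {u | u ≠ v}).Connected) : TwoConnectedSG G := by
  have : Nonempty V := (Nat.card_pos_iff.mp (by omega)).1
  refine ⟨⟨fun x y => ?_⟩, h, hG⟩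
  by_cases hxy : x = y
  · exact hxy ▸ Reachable.refl x
  have := nontrivial_setOf_ne_of_three_le_card h x
  obtain ⟨⟨v, hvx⟩, hvy⟩ := exists_ne (⟨y, Ne.symm hxy⟩ : {u | u ≠ x})
  have hyv : y ≠ v := fun hyv => hvy (Subtype.ext hyv.symm)
  exact ((hG v).preconnected ⟨x, hvx.symm⟩ ⟨y, hyv⟩).map (Embedding.induce _).toHom

lemma TwoConnectedSG.reachable_induce_ne_of_injective {H : SimpleGraph W}
    (hH : TwoConnectedSG H) (f : H →g G) (hf : Injective f) {v : V} {x y : W}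
    (hx : f x ≠ v) (hy : f y ≠ v) :
    (G.induce {u | u ≠ v}).Reachable ⟨f x, hx⟩ ⟨f y, hy⟩ := by
  by_cases hv : ∃ w, f w = v
  · obtain ⟨w, rfl⟩ := hv
    have hmaps : Set.MapsTo f {u | u ≠ w} {u | u ≠ f w} := fun u hu => hf.ne hu
    exact ((hH.2.2 w).preconnected ⟨x, fun h => hx (h ▸ rfl)⟩ ⟨y, fun h => hy (h ▸ rfl)⟩).map
      (induceHom f hmaps)
  · push Not at hv
    let g : H →g G.induce {u | u ≠ v} := ⟨fun u => ⟨f u, hv u⟩, f.map_adj⟩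
    exact (hH.1.preconnected x y).map g

end TwoConnected

lemma BipartiteOn.exists_inl_ne {A B : Type} {H : SimpleGraph (A ⊕ B)} (hb : BipartiteOn H)
    (h : TwoConnectedSG H) (w : A ⊕ B) : ∃ a, inl a ≠ w := by
  have := nontrivial_setOf_ne_of_three_le_card h.2.1 w
  obtain ⟨x⟩ := (inferInstance : Nonempty {u | u ≠ w})
  obtain ⟨y, hxy⟩ := (h.2.2 w).preconnected.exists_adj_of_nontrivial x
  rw [comap_adj] at hxy
  rcases x with ⟨a | b, hx⟩
  · exact ⟨a, hx⟩
  rcases y with ⟨a | b', hy⟩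
  · exact ⟨a, hy⟩
  · exact absurd hxy (hb.2 _ _)

lemma BipartiteOn.nontrivial_left {A B : Type} {H : SimpleGraph (A ⊕ B)} (hb : BipartiteOn H)
    (h : TwoConnectedSG H) : Nontrivial A := by
  obtain ⟨w⟩ := h.1.nonempty
  obtain ⟨a, -⟩ := hb.exists_inl_ne h w
  obtain ⟨a', ha'⟩ := hb.exists_inl_ne h (inl a)
  exact ⟨a', a, fun e => ha' (congrArg inl e)⟩

namespace productJoin

variable {A₁ B₁ A₂ B₂ : Type} {H₁ : SimpleGraph (A₁ ⊕ B₁)} {H₂ : SimpleGraph (A₂ ⊕ B₂)}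

lemma adj_inl_inr_inl {a₁ : A₁} {a₂ : A₂} {b₂ : B₂} (h : H₂.Adj (inl a₂) (inr b₂)) :
    (productJoin H₁ H₂).Adj (inl (a₁, a₂)) (inr (inl (a₁, b₂))) := by
  rw [productJoin, fromRel_adj]
  exact ⟨by simp, Or.inl (Or.inl ⟨a₁, a₂, b₂, rfl, rfl, h⟩)⟩

lemma adj_inl_inr_inr {a₁ : A₁} {b₁ : B₁} {a₂ : A₂} (h : H₁.Adj (inl a₁) (inr b₁)) :
    (productJoin H₁ H₂).Adj (inl (a₁, a₂)) (inr (inr (b₁, a₂))) := by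
  rw [productJoin, fromRel_adj]
  exact ⟨by simp, Or.inl (Or.inr ⟨a₁, a₂, b₁, rfl, rfl, h⟩)⟩

def rightFiber (hb₂ : BipartiteOn H₂) (a₁ : A₁) : H₂ →g productJoin H₁ H₂ where
  toFun := Sum.elim (fun a₂ => inl (a₁, a₂)) (fun b₂ => inr (inl (a₁, b₂)))
  map_rel' := by
    rintro (a₂ | b₂) (a₂' | b₂') h
    · exact absurd h (hb₂.1 _ _)
    · exact adj_inl_inr_inl h
    · exact (adj_inl_inr_inl h.symm).symm
    · exact absurd h (hb₂.2 _ _)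

def leftFiber (hb₁ : BipartiteOn H₁) (a₂ : A₂) : H₁ →g productJoin H₁ H₂ where
  toFun := Sum.elim (fun a₁ => inl (a₁, a₂)) (fun b₁ => inr (inr (b₁, a₂)))
  map_rel' := by
    rintro (a₁ | b₁) (a₁' | b₁') h
    · exact absurd h (hb₁.1 _ _)
    · exact adj_inl_inr_inr h
    · exact (adj_inl_inr_inr h.symm).symm
    · exact absurd h (hb₁.2 _ _)

lemma rightFiber_injective (hb₂ : BipartiteOn H₂) (a₁ : A₁) :
    Injective (rightFiber (H₁ := H₁) hb₂ a₁) := by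
  rintro (a₂ | b₂) (a₂' | b₂') h <;> simp_all [rightFiber]

lemma leftFiber_injective (hb₁ : BipartiteOn H₁) (a₂ : A₂) :
    Injective (leftFiber (H₂ := H₂) hb₁ a₂) := by
  rintro (a₁ | b₁) (a₁' | b₁') h <;> simp_all [leftFiber]

lemma three_le_card [Finite (A₁ ⊕ B₁)] [Nonempty A₁] (hb₂ : BipartiteOn H₂)
    (h₂ : TwoConnectedSG H₂) : 3 ≤ Nat.card ((A₁ × A₂) ⊕ ((A₁ × B₂) ⊕ (B₁ × A₂))) := by
  have := h₂.finite
  have := Finite.sum_left B₁ (α := A₁)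
  have := Finite.sum_right A₁ (β := B₁)
  have := Finite.sum_left B₂ (α := A₂)
  have := Finite.sum_right A₂ (β := B₂)
  obtain ⟨a₁⟩ := ‹Nonempty A₁›
  exact h₂.2.1.trans (Nat.card_le_card_of_injective _ (rightFiber_injective (H₁ := ⊥) hb₂ a₁))

lemma reachable_induce_ne_inl_inl (hb₁ : BipartiteOn H₁) (hb₂ : BipartiteOn H₂)
    (h₁ : TwoConnectedSG H₁) (h₂ : TwoConnectedSG H₂) {v} {a₁ a₁' : A₁} {a₂ a₂' : A₂}
    (h : inl (a₁, a₂) ≠ v) (h' : inl (a₁', a₂') ≠ v) :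
    ((productJoin H₁ H₂).induce {u | u ≠ v}).Reachable
      ⟨inl (a₁, a₂), h⟩ ⟨inl (a₁', a₂'), h'⟩ := by
  have row (a₂ : A₂) {a₁ a₁' : A₁} (h : inl (a₁, a₂) ≠ v) (h' : inl (a₁', a₂) ≠ v) :
      ((productJoin H₁ H₂).induce {u | u ≠ v}).Reachable ⟨inl (a₁, a₂), h⟩ ⟨inl (a₁', a₂), h'⟩ :=
    h₁.reachable_induce_ne_of_injective (leftFiber hb₁ a₂) (leftFiber_injective hb₁ a₂)
      (x := inl a₁) (y := inl a₁') h h'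
  have col (a₁ : A₁) {a₂ a₂' : A₂} (h : inl (a₁, a₂) ≠ v) (h' : inl (a₁, a₂') ≠ v) :
      ((productJoin H₁ H₂).induce {u | u ≠ v}).Reachable ⟨inl (a₁, a₂), h⟩ ⟨inl (a₁, a₂'), h'⟩ :=
    h₂.reachable_induce_ne_of_injective (rightFiber hb₂ a₁) (rightFiber_injective hb₂ a₁)
      (x := inl a₂) (y := inl a₂') h h'
  by_cases hcorner : inl (a₁, a₂') = v
  · have hcorner' : inl (a₁', a₂) ≠ v := by
      rintro rfl
      simp_all
    exact (row a₂ h hcorner').trans (col a₁' hcorner' h')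
  · exact (col a₁ h hcorner).trans (row a₂' hcorner h')

lemma exists_reachable_induce_ne_inl [Nontrivial A₁] [Nontrivial A₂] (hb₁ : BipartiteOn H₁)
    (hb₂ : BipartiteOn H₂) (h₁ : TwoConnectedSG H₁) (h₂ : TwoConnectedSG H₂) {v} (u)
    (hu : u ≠ v) : ∃ (a₁ : A₁) (a₂ : A₂) (h : inl (a₁, a₂) ≠ v),
      ((productJoin H₁ H₂).induce {u | u ≠ v}).Reachable ⟨u, hu⟩ ⟨inl (a₁, a₂), h⟩ := by
  rcases u with ⟨a₁, a₂⟩ | ⟨a₁, b₂⟩ | ⟨b₁, a₂⟩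
  · exact ⟨a₁, a₂, hu, .refl _⟩
  · obtain ⟨a₂, ha₂⟩ := (inl_injective.comp (Prod.mk_right_injective a₁)).exists_ne v
    exact ⟨a₁, a₂, ha₂, h₂.reachable_induce_ne_of_injective (rightFiber hb₂ a₁)
      (rightFiber_injective hb₂ a₁) (x := inr b₂) (y := inl a₂) hu ha₂⟩
  · obtain ⟨a₁, ha₁⟩ := (inl_injective.comp (Prod.mk_left_injective a₂)).exists_ne v
    exact ⟨a₁, a₂, ha₁, h₁.reachable_induce_ne_of_injective (leftFiber hb₁ a₂)
      (leftFiber_injective hb₁ a₂) (x := inr b₁) (y := inl a₁) hu ha₁⟩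

lemma connected_induce_ne [Nontrivial A₁] [Nontrivial A₂] (hb₁ : BipartiteOn H₁)
    (hb₂ : BipartiteOn H₂) (h₁ : TwoConnectedSG H₁) (h₂ : TwoConnectedSG H₂) (v) :
    ((productJoin H₁ H₂).induce {u | u ≠ v}).Connected := by
  obtain ⟨p, hp⟩ := (inl_injective (β := (A₁ × B₂) ⊕ (B₁ × A₂))).exists_ne v
  have : Nonempty {u | u ≠ v} := ⟨⟨inl p, hp⟩⟩
  refine ⟨?_⟩
  rintro ⟨x, hx⟩ ⟨y, hy⟩
  obtain ⟨_, _, hgx, hxg⟩ := exists_reachable_induce_ne_inl hb₁ hb₂ h₁ h₂ x hx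
  obtain ⟨_, _, hgy, hyg⟩ := exists_reachable_induce_ne_inl hb₁ hb₂ h₁ h₂ y hy
  exact hxg.trans ((reachable_induce_ne_inl_inl hb₁ hb₂ h₁ h₂ hgx hgy).trans hyg.symm)

end productJoin

theorem productJoin_twoConnected_general {A₁ B₁ A₂ B₂ : Type}
    (H₁ : SimpleGraph (A₁ ⊕ B₁)) (H₂ : SimpleGraph (A₂ ⊕ B₂))
    (hb₁ : BipartiteOn H₁) (hb₂ : BipartiteOn H₂)
    (h₁ : TwoConnectedSG H₁) (h₂ : TwoConnectedSG H₂) :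
    TwoConnectedSG (productJoin H₁ H₂) := by
  have := hb₁.nontrivial_left h₁
  have := hb₂.nontrivial_left h₂
  have := h₁.finite
  exact twoConnectedSG_of_forall_connected_induce_ne (productJoin.three_le_card hb₂ h₂)
    (productJoin.connected_induce_ne hb₁ hb₂ h₁ h₂)

/-- The product-join of two 2-connected bipartite graphs, each with at
least 3 vertices, is 2-connected. -/
theorem productJoin_twoConnected {A₁ B₁ A₂ B₂ : Type}
    (H₁ : SimpleGraph (A₁ ⊕ B₁)) (H₂ : SimpleGraph (A₂ ⊕ B₂))
    (hb₁ : BipartiteOn H₁) (hb₂ : BipartiteOn H₂)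
    (h₁ : TwoConnectedSG H₁) (h₂ : TwoConnectedSG H₂)
    (hcard₁ : 3 ≤ Nat.card (A₁ ⊕ B₁)) (hcard₂ : 3 ≤ Nat.card (A₂ ⊕ B₂)) :
    TwoConnectedSG (productJoin H₁ H₂) :=
  productJoin_twoConnected_general H₁ H₂ hb₁ hb₂ h₁ h₂
end
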